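/- arXiv:1203.0800 — 4 statements merged into one kernel-verified Lean document; each statement's English description precedes it below -/
import Mathlib

section
/- Let F_d be the free group on d ≥ 2 generators, 2 ≤ p < ∞, 1/p + 1/q = 1, and k ≥ 0. If π is a unitary representation of F_d with a cyclic vector ξ such that s ↦ ⟨π(s)ξ,ξ⟩ ∈ ℓ_p(F_d), then for every finitely supported f with supp(f) ⊆ W_k, ‖π(f)‖ ≤ (k+1)·|f|_q. -/
namespace HaagerupAux

open FreeGroup List

variable {α : Type*} [DecidableEq α]

/-- the no-cancellation relation on letters -/
abbrev NC (p q : α × Bool) : Prop := ¬(p.1 = q.1 ∧ p.2 = !q.2)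

/-- a word is reduced -/
abbrev IsRed (L : List (α × Bool)) : Prop := List.Chain' NC L

theorem reduce_length_le (L : List (α × Bool)) : (reduce L).length ≤ L.length :=
  (FreeGroup.reduce.red (L := L)).length_le

theorem reduce_eq_self_of (L : List (α × Bool)) (h : IsRed L) : reduce L = L := by
  induction L with
  | nil => rfl
  | cons x L ih =>
    unfold IsRed at h
    unfold List.Chain' at h
    rw [List.isChain_cons] at h
    rw [FreeGroup.reduce.cons, ih h.2]
    cases L with
    | nil => rfl
    | cons y L' =>
      have : ¬(x.1 = y.1 ∧ x.2 = !y.2) := h.1 y rfl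
      simp only [if_neg this]

theorem isRed_of_reduce (L : List (α × Bool)) (h : reduce L = L) : IsRed L := by
  induction L with
  | nil => exact List.isChain_nil
  | cons x L ih =>
    unfold IsRed at *
    rw [FreeGroup.reduce.cons] at h
    rcases hr : reduce L with _ | ⟨y, L'⟩ <;> rw [hr] at h
    · simp only [] at h
      have hL0 : L = [] := by
        injection h with h1 h2
        exact h2.symm
      subst hL0
      exact List.isChain_singleton x
    · simp only [] at h
      by_cases hc : x.1 = y.1 ∧ x.2 = !y.2
      · rw [if_pos hc] at h
        exfalso
        have h1 : (y :: L').length ≤ L.length := hr ▸ reduce_length_le L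
        have h2 : L'.length = L.length + 1 := by
          have := congrArg List.length h; simpa using this
        simp at h1; omega
      · rw [if_neg hc] at h
        have hL : L = y :: L' := by
          injection h with h1 h2
          exact h2.symm
        have : reduce L = L := by rw [hr, hL]
        unfold List.Chain'
        rw [List.isChain_cons]
        refine ⟨?_, ih this⟩
        intro z hz
        rw [hL] at hz
        simp at hz
        subst hz
        exact hc

theorem isRed_toWord (x : FreeGroup α) : IsRed (toWord x) :=
  isRed_of_reduce _ (FreeGroup.reduce_toWord x)

theorem toWord_mk_of (L : List (α × Bool)) (h : IsRed L) : (mk L).toWord = L := by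
  rw [FreeGroup.toWord_mk, reduce_eq_self_of L h]

theorem norm_mk_of (L : List (α × Bool)) (h : IsRed L) : norm (mk L) = L.length := by
  rw [FreeGroup.norm, toWord_mk_of L h]

/-- if the norm of a product is additive, the reduced words concatenate -/
theorem toWord_mul_of_add {a w : FreeGroup α} (h : norm (a * w) = norm a + norm w) :
    (a * w).toWord = a.toWord ++ w.toWord := by
  have hm : a * w = mk (a.toWord ++ w.toWord) := by
    rw [← FreeGroup.mul_mk, FreeGroup.mk_toWord, FreeGroup.mk_toWord]
  have hred : Red (a.toWord ++ w.toWord) ((a * w).toWord) := by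
    rw [hm, FreeGroup.toWord_mk]; exact FreeGroup.reduce.red
  have hlen : ((a * w).toWord).length = (a.toWord ++ w.toWord).length := by
    have : ((a * w).toWord).length = norm (a * w) := rfl
    rw [this, h, List.length_append]; rfl
  exact (hred.sublist.eq_of_length hlen)

/-- FG2: uniqueness of splitting at a given position -/
theorem split_unique {a w a' w' : FreeGroup α} (h : a * w = a' * w')
    (h1 : norm (a * w) = norm a + norm w) (h2 : norm (a' * w') = norm a' + norm w')
    (h3 : norm a = norm a') : a = a' ∧ w = w' := by
  have e1 := toWord_mul_of_add h1
  have e2 := toWord_mul_of_add h2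
  have e : a.toWord ++ w.toWord = a'.toWord ++ w'.toWord := by
    rw [← e1, ← e2, h]
  have hl : a.toWord.length = a'.toWord.length := h3
  obtain ⟨ea, ew⟩ := List.append_inj e hl
  exact ⟨FreeGroup.toWord_injective ea, FreeGroup.toWord_injective ew⟩

/-- FG1: cancellation decomposition of a product -/
theorem exists_cancel (t u : FreeGroup α) :
    ∃ a w c : FreeGroup α, t = a * w ∧ u = w⁻¹ * c ∧
      norm t = norm a + norm w ∧ norm u = norm w + norm c ∧
      norm (t * u) = norm a + norm c := by
  generalize hn : norm t = n
  induction n using Nat.strong_induction_on generalizing t u with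
  | _ n ih =>
  subst hn
  rcases List.eq_nil_or_concat t.toWord with hT | ⟨T₀, x, hT⟩
  · -- t = 1
    have ht : t = 1 := FreeGroup.toWord_eq_nil_iff.mp hT
    refine ⟨1, 1, u, by simp [ht], by simp, by simp [ht, FreeGroup.norm_one], by
      simp [FreeGroup.norm_one], by simp [ht, FreeGroup.norm_one]⟩
  rcases hU : u.toWord with _ | ⟨y, U₁⟩
  · -- u = 1
    have hu : u = 1 := FreeGroup.toWord_eq_nil_iff.mp hU
    exact ⟨t, 1, 1, by simp, by simp [hu], by simp [FreeGroup.norm_one], by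
      simp [hu, FreeGroup.norm_one], by simp [hu, FreeGroup.norm_one]⟩
  rw [List.concat_eq_append] at hT
  by_cases hxy : y = (x.1, !x.2)
  · -- cancellation of the junction letters; recurse
    set t' := mk T₀ with ht'
    set u' := mk U₁ with hu'
    set g := mk [x] with hg
    have hredT : IsRed (T₀ ++ [x]) := hT ▸ isRed_toWord t
    have hredT₀ : IsRed T₀ := (List.isChain_append.mp hredT).1
    have hredU : IsRed (y :: U₁) := hU ▸ isRed_toWord u
    have hredU₁ : IsRed U₁ := hredU.tail
    have hnt : norm t = T₀.length + 1 := by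
      show t.toWord.length = _
      rw [hT]; simp
    have hnt' : norm t' = T₀.length := norm_mk_of _ hredT₀
    have hnu : norm u = U₁.length + 1 := by
      show u.toWord.length = _
      rw [hU]; simp
    have hnu' : norm u' = U₁.length := norm_mk_of _ hredU₁
    have hng : norm g = 1 := by
      rw [hg, norm_mk_of]
      · rfl
      · exact List.isChain_singleton x
    have htfact : t = t' * g := by
      conv_lhs => rw [← FreeGroup.mk_toWord (x := t), hT]
      rw [ht', hg, FreeGroup.mul_mk]
    have hginv : g⁻¹ = mk [y] := by
      rw [hg, FreeGroup.inv_mk]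
      congr 1
      rw [hxy]
      simp [FreeGroup.invRev]
    have hufact : u = g⁻¹ * u' := by
      conv_lhs => rw [← FreeGroup.mk_toWord (x := u), hU]
      rw [hginv, hu', FreeGroup.mul_mk]
      rfl
    obtain ⟨a, w₀, c, e1, e2, e3, e4, e5⟩ := ih T₀.length (by omega) t' u' hnt'
    refine ⟨a, w₀ * g, c, ?_, ?_, ?_, ?_, ?_⟩
    · rw [htfact, e1, mul_assoc]
    · rw [hufact, e2, mul_inv_rev, mul_assoc]
    · -- norm t = norm a + norm (w₀ * g)
      have hle : norm (w₀ * g) ≤ norm w₀ + 1 := by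
        calc norm (w₀ * g) ≤ norm w₀ + norm g := FreeGroup.norm_mul_le _ _
        _ = norm w₀ + 1 := by rw [hng]
      have hge : norm a + norm w₀ + 1 ≤ norm a + norm (w₀ * g) := by
        have : t = a * (w₀ * g) := by rw [htfact, e1, mul_assoc]
        have h2 : norm t ≤ norm a + norm (w₀ * g) := this ▸ FreeGroup.norm_mul_le _ _
        omega
      omega
    · -- norm u = norm (w₀ * g) + norm c
      have hle : norm (w₀ * g) ≤ norm w₀ + 1 := by
        calc norm (w₀ * g) ≤ norm w₀ + norm g := FreeGroup.norm_mul_le _ _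
        _ = norm w₀ + 1 := by rw [hng]
      have hge : norm a + norm w₀ + 1 ≤ norm a + norm (w₀ * g) := by
        have : t = a * (w₀ * g) := by rw [htfact, e1, mul_assoc]
        have h2 : norm t ≤ norm a + norm (w₀ * g) := this ▸ FreeGroup.norm_mul_le _ _
        omega
      omega
    · -- norm (t * u) = norm a + norm c
      have : t * u = t' * u' := by
        rw [htfact, hufact, mul_assoc, ← mul_assoc g, mul_inv_cancel, one_mul]
      rw [this, e5]
  · -- no cancellation: the product is reduced
    refine ⟨t, 1, u, by simp, by simp, by simp [FreeGroup.norm_one],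
      by simp [FreeGroup.norm_one], ?_⟩
    have hprod : t * u = mk (t.toWord ++ u.toWord) := by
      rw [← FreeGroup.mul_mk, FreeGroup.mk_toWord, FreeGroup.mk_toWord]
    have hred : IsRed (t.toWord ++ u.toWord) := by
      unfold IsRed
      unfold List.Chain'
      rw [List.isChain_append]
      refine ⟨isRed_toWord t, isRed_toWord u, ?_⟩
      intro p hp q hq
      rw [hT] at hp
      rw [List.getLast?_concat] at hp
      rw [hU] at hq
      simp at hp hq
      subst hp; subst hq
      intro hc
      exact hxy (Prod.ext hc.1.symm (by simp [hc.2]))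
    rw [hprod, norm_mk_of _ hred, List.length_append]
    rfl



open Finset FreeGroup

variable {ι : Type*}

/-- nesting of `ℓ^q` norms on finite sets: `‖·‖_{q'} ≤ ‖·‖_q` for `q ≤ q'`. -/
theorem lnest {q q' : ℝ} (hq : 0 < q) (hqq : q ≤ q') (F : Finset ι) (f : ι → ℝ)
    (hf : ∀ i ∈ F, 0 ≤ f i) :
    (∑ i ∈ F, f i ^ q') ^ (1/q') ≤ (∑ i ∈ F, f i ^ q) ^ (1/q) := by
  have hq' : 0 < q' := lt_of_lt_of_le hq hqq
  set S := ∑ i ∈ F, f i ^ q with hS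
  have hSnn : 0 ≤ S := Finset.sum_nonneg fun i hi => Real.rpow_nonneg (hf i hi) _
  rcases eq_or_lt_of_le hSnn with hS0 | hSpos
  · -- S = 0 : all f i = 0
    have hzero : ∀ i ∈ F, f i = 0 := by
      intro i hi
      have : ∀ j ∈ F, 0 ≤ f j ^ q := fun j hj => Real.rpow_nonneg (hf j hj) _
      have h0 : f i ^ q = 0 := by
        have := (Finset.sum_eq_zero_iff_of_nonneg this).mp hS0.symm i hi
        exact this
      by_contra hne
      have hpos : 0 < f i := lt_of_le_of_ne (hf i hi) (Ne.symm hne)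
      exact absurd h0 (ne_of_gt (Real.rpow_pos_of_pos hpos _))
    have h1 : (∑ i ∈ F, f i ^ q') = 0 :=
      Finset.sum_eq_zero fun i hi => by rw [hzero i hi, Real.zero_rpow (ne_of_gt hq')]
    rw [h1, ← hS0, Real.zero_rpow (by positivity), Real.zero_rpow (by positivity)]
  · -- S > 0
    have key : ∑ i ∈ F, f i ^ q' ≤ S ^ (q'/q) := by
      have step : ∀ i ∈ F, f i ^ q' ≤ f i ^ q * S ^ ((q'-q)/q) := by
        intro i hi
        rcases eq_or_lt_of_le (hf i hi) with h0 | hpos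
        · rw [← h0, Real.zero_rpow (ne_of_gt hq')]
          positivity
        · have hle : f i ≤ S ^ (1/q) := by
            have h1 : f i ^ q ≤ S := Finset.single_le_sum
              (fun j hj => Real.rpow_nonneg (hf j hj) _) hi
            calc f i = (f i ^ q) ^ (1/q) := by
                  rw [← Real.rpow_mul (le_of_lt hpos), mul_one_div, div_self (ne_of_gt hq),
                    Real.rpow_one]
            _ ≤ S ^ (1/q) := Real.rpow_le_rpow (by positivity) h1 (by positivity)
          calc f i ^ q' = f i ^ q * f i ^ (q' - q) := by
                rw [← Real.rpow_add hpos]; ring_nf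
          _ ≤ f i ^ q * (S ^ (1/q)) ^ (q' - q) := by
              apply mul_le_mul_of_nonneg_left _ (by positivity)
              exact Real.rpow_le_rpow (le_of_lt hpos) hle (by linarith)
          _ = f i ^ q * S ^ ((q'-q)/q) := by
              rw [← Real.rpow_mul hSnn]
              ring_nf
      calc ∑ i ∈ F, f i ^ q' ≤ ∑ i ∈ F, f i ^ q * S ^ ((q'-q)/q) :=
            Finset.sum_le_sum step
      _ = S * S ^ ((q'-q)/q) := by rw [← Finset.sum_mul]
      _ = S ^ (1 + (q'-q)/q) := by rw [Real.rpow_add hSpos, Real.rpow_one]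
      _ = S ^ (q'/q) := by congr 1; field_simp; ring
    calc (∑ i ∈ F, f i ^ q') ^ (1/q') ≤ (S ^ (q'/q)) ^ (1/q') :=
          Real.rpow_le_rpow (Finset.sum_nonneg fun i hi => Real.rpow_nonneg (hf i hi) _)
            key (by positivity)
    _ = S ^ (1/q) := by
        rw [← Real.rpow_mul hSnn]
        congr 1
        field_simp


section LQ

variable {G : Type*} [Group G] [DecidableEq G] {q : ℝ}

/-- the `q`-th power sum of a finitely supported function -/
noncomputable def qsum (q : ℝ) (v : MonoidAlgebra ℂ G) : ℝ := ∑ s ∈ v.coeff.support, ‖v.coeff s‖ ^ q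

/-- the `ℓ^q` norm of a finitely supported function -/
noncomputable def lqF (q : ℝ) (v : MonoidAlgebra ℂ G) : ℝ := qsum q v ^ (1/q)

theorem qsum_nonneg (v : MonoidAlgebra ℂ G) : 0 ≤ qsum q v :=
  Finset.sum_nonneg fun s _ => Real.rpow_nonneg (norm_nonneg _) _

theorem lqF_nonneg (v : MonoidAlgebra ℂ G) : 0 ≤ lqF q v :=
  Real.rpow_nonneg (qsum_nonneg v) _

theorem qsum_eq_sum (hq : q ≠ 0) (v : MonoidAlgebra ℂ G) {F : Finset G}
    (hF : v.coeff.support ⊆ F) : qsum q v = ∑ s ∈ F, ‖v.coeff s‖ ^ q := by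
  refine Finset.sum_subset hF fun s _ hs => ?_
  rw [Finsupp.notMem_support_iff.mp hs, norm_zero, Real.zero_rpow hq]

theorem lqF_zero (hq : q ≠ 0) : lqF q (0 : MonoidAlgebra ℂ G) = 0 := by
  have : qsum q (0 : MonoidAlgebra ℂ G) = 0 := by simp [qsum]
  rw [lqF, this, Real.zero_rpow (by simp [hq])]

theorem lqF_add_le (hq : 1 ≤ q) (v w : MonoidAlgebra ℂ G) :
    lqF q (v + w) ≤ lqF q v + lqF q w := by
  have hq0 : q ≠ 0 := by positivity
  have h1 : qsum q (v + w) = ∑ s ∈ v.coeff.support ∪ w.coeff.support, ‖v.coeff s + w.coeff s‖ ^ q := by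
    rw [qsum_eq_sum hq0 (v + w) Finsupp.support_add]
    exact Finset.sum_congr rfl fun s _ => by rw [MonoidAlgebra.coeff_add, Finsupp.add_apply]
  have h2 : qsum q (v + w) ≤ ∑ s ∈ v.coeff.support ∪ w.coeff.support, (‖v.coeff s‖ + ‖w.coeff s‖) ^ q := by
    rw [h1]
    exact Finset.sum_le_sum fun s _ =>
      Real.rpow_le_rpow (norm_nonneg _) (norm_add_le _ _) (by positivity)
  calc lqF q (v + w) = qsum q (v + w) ^ (1/q) := rfl
  _ ≤ (∑ s ∈ v.coeff.support ∪ w.coeff.support, (‖v.coeff s‖ + ‖w.coeff s‖) ^ q) ^ (1/q) :=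
        Real.rpow_le_rpow (qsum_nonneg _) h2 (by positivity)
  _ ≤ (∑ s ∈ v.coeff.support ∪ w.coeff.support, ‖v.coeff s‖ ^ q) ^ (1/q)
      + (∑ s ∈ v.coeff.support ∪ w.coeff.support, ‖w.coeff s‖ ^ q) ^ (1/q) :=
        Real.Lp_add_le_of_nonneg (s := v.coeff.support ∪ w.coeff.support) (f := fun s => ‖v.coeff s‖)
          (g := fun s => ‖w.coeff s‖) hq (fun s _ => norm_nonneg _) (fun s _ => norm_nonneg _)
  _ = lqF q v + lqF q w := by
      rw [lqF, lqF, qsum_eq_sum hq0 v Finset.subset_union_left,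
        qsum_eq_sum hq0 w Finset.subset_union_right]

theorem lqF_sum_le (hq : 1 ≤ q) {κ : Type*} (F : Finset κ) (y : κ → MonoidAlgebra ℂ G) :
    lqF q (∑ i ∈ F, y i) ≤ ∑ i ∈ F, lqF q (y i) := by
  classical
  induction F using Finset.cons_induction with
  | empty => simp [lqF_zero (by positivity : q ≠ 0)]
  | cons i F hi ih =>
    rw [Finset.sum_cons, Finset.sum_cons]
    exact le_trans (lqF_add_le hq _ _) (by linarith [ih])

theorem lqF_single_mul (hq : 0 < q) (t : G) (c : ℂ) (x : MonoidAlgebra ℂ G) :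
    lqF q (MonoidAlgebra.single t c * x) = ‖c‖ * lqF q x := by
  have hq0 : q ≠ 0 := ne_of_gt hq
  have happ : ∀ s, (MonoidAlgebra.single t c * x).coeff s = c * x.coeff (t⁻¹ * s) := fun s =>
    MonoidAlgebra.coeff_single_mul_apply x c t s
  have hsupp : (MonoidAlgebra.single t c * x).coeff.support ⊆ x.coeff.support.image (fun r => t * r) := by
    intro s hs
    rw [Finsupp.mem_support_iff, happ s] at hs
    have hx : x.coeff (t⁻¹ * s) ≠ 0 := fun h => hs (by rw [h, mul_zero])
    refine Finset.mem_image.mpr ⟨t⁻¹ * s, Finsupp.mem_support_iff.mpr hx, by group⟩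
  have h1 : qsum q (MonoidAlgebra.single t c * x) = ‖c‖ ^ q * qsum q x := by
    rw [qsum_eq_sum hq0 _ hsupp, Finset.sum_image (fun a _ b _ h => by
      exact mul_left_cancel h)]
    rw [qsum, Finset.mul_sum]
    refine Finset.sum_congr rfl fun r _ => ?_
    rw [happ, inv_mul_cancel_left, norm_mul,
      Real.mul_rpow (norm_nonneg _) (norm_nonneg _)]
  rw [lqF, h1, Real.mul_rpow (by positivity) (qsum_nonneg _), lqF]
  congr 1
  rw [← Real.rpow_mul (norm_nonneg c), mul_one_div, div_self hq0, Real.rpow_one]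

/-- `ℓ^1`–`ℓ^q` convolution bound -/
theorem lqF_mul_le_l1 (hq : 1 ≤ q) (g x : MonoidAlgebra ℂ G) :
    lqF q (g * x) ≤ (∑ t ∈ g.coeff.support, ‖g.coeff t‖) * lqF q x := by
  have hg : g * x = ∑ t ∈ g.coeff.support, MonoidAlgebra.single t (g.coeff t) * x := by
    rw [← Finset.sum_mul]
    congr 1
    exact (MonoidAlgebra.sum_coeff_single g).symm
  rw [hg]
  calc lqF q (∑ t ∈ g.coeff.support, MonoidAlgebra.single t (g.coeff t) * x)
      ≤ ∑ t ∈ g.coeff.support, lqF q (MonoidAlgebra.single t (g.coeff t) * x) := lqF_sum_le hq _ _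
  _ = ∑ t ∈ g.coeff.support, ‖g.coeff t‖ * lqF q x := Finset.sum_congr rfl fun t _ =>
      lqF_single_mul (by positivity) t (g.coeff t) x
  _ = (∑ t ∈ g.coeff.support, ‖g.coeff t‖) * lqF q x := by rw [Finset.sum_mul]

end LQ


section B1

variable {α : Type*} [DecidableEq α] {q : ℝ}

/-- amount of cancellation in a product -/
def jval (t r : FreeGroup α) : ℕ :=
  (FreeGroup.norm t + FreeGroup.norm r - FreeGroup.norm (t * r)) / 2

theorem jval_decomp (t r : FreeGroup α) :
    ∃ a w c : FreeGroup α, t = a * w ∧ r = w⁻¹ * c ∧ FreeGroup.norm w = jval t r ∧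
      FreeGroup.norm t = FreeGroup.norm a + FreeGroup.norm w ∧
      FreeGroup.norm r = FreeGroup.norm w + FreeGroup.norm c ∧
      FreeGroup.norm (t * r) = FreeGroup.norm a + FreeGroup.norm c := by
  obtain ⟨a, w, c, h1, h2, h3, h4, h5⟩ := exists_cancel t r
  exact ⟨a, w, c, h1, h2, by unfold jval; omega, h3, h4, h5⟩

theorem jval_le (t r : FreeGroup α) : jval t r ≤ FreeGroup.norm t := by
  obtain ⟨a, w, c, _, _, h3, h4, _, _⟩ := jval_decomp t r
  omega

/-- the key uniqueness statement for the Haagerup triple-sum argument -/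
theorem cancel_uniq {k j : ℕ} {t r t' r' t₂ r₂ t₂' r₂' : FreeGroup α}
    (hk : FreeGroup.norm t = k) (hk' : FreeGroup.norm t' = k)
    (hk₂ : FreeGroup.norm t₂ = k) (hk₂' : FreeGroup.norm t₂' = k)
    (hj1 : jval t r = j) (hj2 : jval t' r' = j)
    (hj3 : jval t₂ r₂ = j) (hj4 : jval t₂' r₂' = j)
    (hs1 : t * r = t' * r') (hs2 : t₂ * r₂ = t₂' * r₂')
    (ht : t = t₂) (hr : r' = r₂') : r = r₂ ∧ t' = t₂' := by
  obtain ⟨a, w, c, e1, e2, e3, e4, e5, e6⟩ := jval_decomp t r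
  obtain ⟨a', w', c', f1, f2, f3, f4, f5, f6⟩ := jval_decomp t' r'
  obtain ⟨a₂, w₂, c₂, g1, g2, g3, g4, g5, g6⟩ := jval_decomp t₂ r₂
  obtain ⟨a₂', w₂', c₂', i1, i2, i3, i4, i5, i6⟩ := jval_decomp t₂' r₂'
  rw [hj1] at e3; rw [hj2] at f3; rw [hj3] at g3; rw [hj4] at i3
  -- step 1 : a = a₂, w = w₂ from t = t₂
  have st1 : a = a₂ ∧ w = w₂ := by
    apply split_unique (by rw [← e1, ← g1, ht])
    · rw [← e1]; omega
    · rw [← g1]; omega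
    · omega
  -- step 2 : w' = w₂', c' = c₂' from r' = r₂'
  have st2 : w'⁻¹ = w₂'⁻¹ ∧ c' = c₂' := by
    apply split_unique (by rw [← f2, ← i2, hr])
    · rw [← f2]
      rw [FreeGroup.norm_inv_eq]
      omega
    · rw [← i2]
      rw [FreeGroup.norm_inv_eq]
      omega
    · rw [FreeGroup.norm_inv_eq, FreeGroup.norm_inv_eq]
      omega
  -- step 3 : a = a', c = c' from t * r = t' * r'
  have hac : t * r = a * c := by rw [e1, e2]; group
  have hac' : t' * r' = a' * c' := by rw [f1, f2]; group
  have st3 : a = a' ∧ c = c' := by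
    apply split_unique (by rw [← hac, ← hac', hs1])
    · rw [← hac]; omega
    · rw [← hac']; omega
    · omega
  -- step 4 : a₂ = a₂', c₂ = c₂'
  have hac₂ : t₂ * r₂ = a₂ * c₂ := by rw [g1, g2]; group
  have hac₂' : t₂' * r₂' = a₂' * c₂' := by rw [i1, i2]; group
  have st4 : a₂ = a₂' ∧ c₂ = c₂' := by
    apply split_unique (by rw [← hac₂, ← hac₂', hs2])
    · rw [← hac₂]; omega
    · rw [← hac₂']; omega
    · omega
  -- step 5 : the two products coincide
  have hcc : c = c₂ := by
    rw [st3.2, st2.2, ← st4.2]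
  have hss : t * r = t₂ * r₂ := by
    rw [hac, hac₂, st1.1, hcc]
  constructor
  · exact mul_left_cancel (ht ▸ hss)
  · have : t' * r' = t₂' * r₂' := by rw [← hs1, ← hs2, hss]
    exact mul_right_cancel (hr ▸ this)

theorem conv_decomp (k : ℕ) (u x : MonoidAlgebra ℂ (FreeGroup α))
    (hu : ∀ t ∈ u.coeff.support, FreeGroup.norm t = k) :
    u * x = ∑ j ∈ Finset.range (k+1),
      ∑ p ∈ (u.coeff.support ×ˢ x.coeff.support).filter (fun p => jval p.1 p.2 = j),
        MonoidAlgebra.single (p.1 * p.2) (u.coeff p.1 * x.coeff p.2) := by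
  have h1 : u * x = ∑ p ∈ u.coeff.support ×ˢ x.coeff.support,
      MonoidAlgebra.single (p.1 * p.2) (u.coeff p.1 * x.coeff p.2) := by
    rw [MonoidAlgebra.mul_def]
    rw [Finsupp.sum]
    rw [Finset.sum_product]
    exact Finset.sum_congr rfl fun a _ => rfl
  rw [h1]
  exact (Finset.sum_fiberwise_of_maps_to (fun p hp => by
    rw [Finset.mem_range]
    have h2 := jval_le p.1 p.2
    have h3 := hu p.1 (Finset.mem_product.mp hp).1
    omega) _).symm

theorem Vj_bound (hq1 : 1 < q) (hq2 : q ≤ 2) {k : ℕ} (j : ℕ)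
    (u x : MonoidAlgebra ℂ (FreeGroup α)) (hu : ∀ t ∈ u.coeff.support, FreeGroup.norm t = k) :
    lqF q (∑ p ∈ (u.coeff.support ×ˢ x.coeff.support).filter (fun p => jval p.1 p.2 = j),
        MonoidAlgebra.single (p.1 * p.2) (u.coeff p.1 * x.coeff p.2)) ≤ lqF q u * lqF q x := by
  classical
  have hq0 : (0:ℝ) < q := lt_trans one_pos hq1
  have hqne : q ≠ 0 := ne_of_gt hq0
  set D := (u.coeff.support ×ˢ x.coeff.support).filter (fun p => jval p.1 p.2 = j) with hD
  set V := ∑ p ∈ D, MonoidAlgebra.single (p.1 * p.2) (u.coeff p.1 * x.coeff p.2) with hV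
  set M := D.image (fun p => p.1 * p.2) with hM
  have happ : ∀ s, V.coeff s = ∑ p ∈ D.filter (fun p => p.1 * p.2 = s), u.coeff p.1 * x.coeff p.2 := by
    intro s
    calc V.coeff s = ∑ p ∈ D, (if p.1 * p.2 = s then u.coeff p.1 * x.coeff p.2 else 0) := by
          rw [hV, MonoidAlgebra.coeff_sum, Finset.sum_apply']
          exact Finset.sum_congr rfl fun p _ => Finsupp.single_apply
    _ = ∑ p ∈ D.filter (fun p => p.1 * p.2 = s), u.coeff p.1 * x.coeff p.2 :=
          (Finset.sum_filter _ _).symm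
  have hsupp : V.coeff.support ⊆ M := by
    intro s hs
    rw [Finsupp.mem_support_iff] at hs
    by_contra hsM
    apply hs
    rw [happ s]
    refine Finset.sum_eq_zero fun p hp => ?_
    exfalso
    exact hsM (Finset.mem_image.mpr ⟨p, (Finset.mem_filter.mp hp).1,
      (Finset.mem_filter.mp hp).2⟩)
  set P : FreeGroup α → ℝ := fun s => ∑ p ∈ D.filter (fun p => p.1 * p.2 = s), ‖u.coeff p.1‖ ^ q
    with hP
  set Q : FreeGroup α → ℝ := fun s => ∑ p ∈ D.filter (fun p => p.1 * p.2 = s), ‖x.coeff p.2‖ ^ q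
    with hQ
  have hPnn : ∀ s, 0 ≤ P s := fun s =>
    Finset.sum_nonneg fun p _ => Real.rpow_nonneg (norm_nonneg _) _
  have hQnn : ∀ s, 0 ≤ Q s := fun s =>
    Finset.sum_nonneg fun p _ => Real.rpow_nonneg (norm_nonneg _) _
  have hpoint : ∀ s, ‖V.coeff s‖ ^ q ≤ P s * Q s := by
    intro s
    set T := D.filter (fun p => p.1 * p.2 = s) with hT
    have h4 : ‖V.coeff s‖ ≤ ∑ p ∈ T, ‖u.coeff p.1‖ * ‖x.coeff p.2‖ := by
      rw [happ s]
      exact le_trans (norm_sum_le _ _)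
        (Finset.sum_le_sum fun p _ => le_of_eq (norm_mul _ _))
    have hconj : Real.HolderConjugate (Real.conjExponent q) q :=
      (Real.HolderConjugate.conjExponent hq1).symm
    have h5 : ∑ p ∈ T, ‖u.coeff p.1‖ * ‖x.coeff p.2‖ ≤
        (∑ p ∈ T, ‖u.coeff p.1‖ ^ Real.conjExponent q) ^ (1 / Real.conjExponent q)
        * (∑ p ∈ T, ‖x.coeff p.2‖ ^ q) ^ (1/q) := by
      have := Real.inner_le_Lp_mul_Lq (s := T) (f := fun p => ‖u.coeff p.1‖)
        (g := fun p => ‖x.coeff p.2‖) hconj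
      simpa [abs_norm] using this
    have hqq' : q ≤ Real.conjExponent q := by
      rw [Real.conjExponent, le_div_iff₀ (by linarith)]
      nlinarith
    have h6 : (∑ p ∈ T, ‖u.coeff p.1‖ ^ Real.conjExponent q) ^ (1 / Real.conjExponent q)
        ≤ P s ^ (1/q) := lnest hq0 hqq' T _ (fun p _ => norm_nonneg _)
    have h7 : ‖V.coeff s‖ ≤ P s ^ (1/q) * Q s ^ (1/q) := by
      refine le_trans h4 (le_trans h5 ?_)
      exact mul_le_mul_of_nonneg_right h6
        (Real.rpow_nonneg (Finset.sum_nonneg fun p _ =>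
          Real.rpow_nonneg (norm_nonneg _) _) _)
    calc ‖V.coeff s‖ ^ q ≤ (P s ^ (1/q) * Q s ^ (1/q)) ^ q :=
          Real.rpow_le_rpow (norm_nonneg _) h7 (le_of_lt hq0)
    _ = P s * Q s := by
        rw [Real.mul_rpow (Real.rpow_nonneg (hPnn s) _) (Real.rpow_nonneg (hQnn s) _),
          ← Real.rpow_mul (hPnn s), ← Real.rpow_mul (hQnn s), one_div_mul_cancel hqne,
          Real.rpow_one, Real.rpow_one]
  have hsum : qsum q V ≤ ∑ s ∈ M, P s * Q s := by
    rw [qsum_eq_sum hqne V hsupp]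
    exact Finset.sum_le_sum fun s _ => hpoint s
  set W := (D ×ˢ D).filter
      (fun w : (FreeGroup α × FreeGroup α) × (FreeGroup α × FreeGroup α) =>
        w.1.1 * w.1.2 = w.2.1 * w.2.2) with hW
  have hfib : ∑ s ∈ M, P s * Q s = ∑ w ∈ W, ‖u.coeff w.1.1‖ ^ q * ‖x.coeff w.2.2‖ ^ q := by
    have hmaps : ∀ w ∈ W, w.1.1 * w.1.2 ∈ M := fun w hw => by
      rw [hW, Finset.mem_filter, Finset.mem_product] at hw
      exact Finset.mem_image.mpr ⟨w.1, hw.1.1, rfl⟩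
    rw [← Finset.sum_fiberwise_of_maps_to hmaps
      (fun w : (FreeGroup α × FreeGroup α) × (FreeGroup α × FreeGroup α) =>
        ‖u.coeff w.1.1‖ ^ q * ‖x.coeff w.2.2‖ ^ q)]
    refine Finset.sum_congr rfl fun s hs => ?_
    have hTT : W.filter (fun w => w.1.1 * w.1.2 = s)
        = (D.filter (fun p => p.1 * p.2 = s)) ×ˢ (D.filter (fun p => p.1 * p.2 = s)) := by
      ext w
      simp only [hW, Finset.mem_filter, Finset.mem_product]
      constructor
      · rintro ⟨⟨⟨h1, h2⟩, h3⟩, h4⟩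
        exact ⟨⟨h1, h4⟩, h2, by rw [← h3, h4]⟩
      · rintro ⟨⟨h1, h2⟩, h3, h4⟩
        exact ⟨⟨⟨h1, h3⟩, by rw [h2, h4]⟩, h2⟩
    rw [hTT, Finset.sum_product]
    simp only [hP, hQ]
    rw [Finset.sum_mul_sum]
  have hinj : ∀ w₁ ∈ W, ∀ w₂ ∈ W,
      (fun w : (FreeGroup α × FreeGroup α) × (FreeGroup α × FreeGroup α) =>
        (w.1.1, w.2.2)) w₁ =
      (fun w : (FreeGroup α × FreeGroup α) × (FreeGroup α × FreeGroup α) =>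
        (w.1.1, w.2.2)) w₂ → w₁ = w₂ := by
    intro w₁ hw₁ w₂ hw₂ heq
    rw [hW, Finset.mem_filter, Finset.mem_product] at hw₁ hw₂
    obtain ⟨⟨hw₁1, hw₁2⟩, hw₁s⟩ := hw₁
    obtain ⟨⟨hw₂1, hw₂2⟩, hw₂s⟩ := hw₂
    rw [hD, Finset.mem_filter, Finset.mem_product] at hw₁1 hw₁2 hw₂1 hw₂2
    simp only [Prod.mk.injEq] at heq
    obtain ⟨ht, hr⟩ := heq
    obtain ⟨hrr, htt⟩ := cancel_uniq (k := k) (j := j)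
      (hu _ hw₁1.1.1) (hu _ hw₁2.1.1) (hu _ hw₂1.1.1) (hu _ hw₂2.1.1)
      hw₁1.2 hw₁2.2 hw₂1.2 hw₂2.2 hw₁s hw₂s ht hr
    have e1 : w₁.1 = w₂.1 := Prod.ext ht hrr
    have e2 : w₁.2 = w₂.2 := Prod.ext htt hr
    exact Prod.ext e1 e2
  have himg : ∑ w ∈ W, ‖u.coeff w.1.1‖ ^ q * ‖x.coeff w.2.2‖ ^ q ≤ qsum q u * qsum q x := by
    have h8 := Finset.sum_image (s := W) (g := fun w => (w.1.1, w.2.2))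
      (f := fun y : FreeGroup α × FreeGroup α => ‖u.coeff y.1‖ ^ q * ‖x.coeff y.2‖ ^ q) hinj
    have h8' : ∑ w ∈ W, ‖u.coeff w.1.1‖ ^ q * ‖x.coeff w.2.2‖ ^ q
        = ∑ y ∈ W.image (fun w => (w.1.1, w.2.2)), ‖u.coeff y.1‖ ^ q * ‖x.coeff y.2‖ ^ q := h8.symm
    rw [h8']
    have h9 : W.image (fun w => (w.1.1, w.2.2)) ⊆ u.coeff.support ×ˢ x.coeff.support := by
      intro y hy
      obtain ⟨w, hw, hwy⟩ := Finset.mem_image.mp hy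
      rw [hW, Finset.mem_filter, Finset.mem_product] at hw
      obtain ⟨⟨hw1, hw2⟩, _⟩ := hw
      rw [hD, Finset.mem_filter, Finset.mem_product] at hw1 hw2
      rw [← hwy]
      exact Finset.mem_product.mpr ⟨hw1.1.1, hw2.1.2⟩
    refine le_trans (Finset.sum_le_sum_of_subset_of_nonneg h9
      (fun y _ _ => by positivity)) (le_of_eq ?_)
    rw [Finset.sum_product]
    simp only [qsum]
    rw [Finset.sum_mul_sum]
  have hfinal : qsum q V ≤ qsum q u * qsum q x := le_trans hsum (hfib ▸ himg)
  calc lqF q V = qsum q V ^ (1/q) := rfl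
  _ ≤ (qsum q u * qsum q x) ^ (1/q) :=
      Real.rpow_le_rpow (qsum_nonneg _) hfinal (by positivity)
  _ = lqF q u * lqF q x := Real.mul_rpow (qsum_nonneg _) (qsum_nonneg _)

/-- Haagerup's `ℓ^q` convolution inequality for sphere-supported functions -/
theorem B1 (hq1 : 1 < q) (hq2 : q ≤ 2) (k : ℕ) (u x : MonoidAlgebra ℂ (FreeGroup α))
    (hu : ∀ t ∈ u.coeff.support, FreeGroup.norm t = k) :
    lqF q (u * x) ≤ ((k : ℝ) + 1) * (lqF q u * lqF q x) := by
  rw [conv_decomp k u x hu]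
  calc lqF q (∑ j ∈ Finset.range (k+1), ∑ p ∈ (u.coeff.support ×ˢ x.coeff.support).filter
        (fun p => jval p.1 p.2 = j), MonoidAlgebra.single (p.1 * p.2) (u.coeff p.1 * x.coeff p.2))
      ≤ ∑ j ∈ Finset.range (k+1), lqF q (∑ p ∈ (u.coeff.support ×ˢ x.coeff.support).filter
        (fun p => jval p.1 p.2 = j), MonoidAlgebra.single (p.1 * p.2) (u.coeff p.1 * x.coeff p.2)) :=
        lqF_sum_le (le_of_lt hq1) _ _
  _ ≤ ∑ _j ∈ Finset.range (k+1), lqF q u * lqF q x :=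
        Finset.sum_le_sum fun j _ => Vj_bound hq1 hq2 j u x hu
  _ = ((k : ℝ) + 1) * (lqF q u * lqF q x) := by
      rw [Finset.sum_const, Finset.card_range, nsmul_eq_mul]
      push_cast
      ring

end B1



section REP

open scoped InnerProductSpace

variable {α : Type*} [DecidableEq α]
variable {H : Type*} [NormedAddCommGroup H] [InnerProductSpace ℂ H] [CompleteSpace H]

/-- the formal adjoint (star) on the group algebra -/
noncomputable def starF (u : MonoidAlgebra ℂ (FreeGroup α)) : MonoidAlgebra ℂ (FreeGroup α) :=
  MonoidAlgebra.ofCoeff (Finsupp.mapDomain (fun s => s⁻¹) (Finsupp.mapRange (starRingEnd ℂ) (map_zero _) u.coeff))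

theorem starF_single (s : FreeGroup α) (c : ℂ) :
    starF (MonoidAlgebra.single s c) = MonoidAlgebra.single s⁻¹ ((starRingEnd ℂ) c) := by
  unfold starF
  rw [MonoidAlgebra.coeff_single, Finsupp.mapRange_single, Finsupp.mapDomain_single]; rfl

theorem starF_zero : starF (0 : MonoidAlgebra ℂ (FreeGroup α)) = 0 := by
  unfold starF
  simp

theorem starF_add (u v : MonoidAlgebra ℂ (FreeGroup α)) :
    starF (u + v) = starF u + starF v := by
  unfold starF
  rw [MonoidAlgebra.coeff_add, Finsupp.mapRange_add (map_add _), Finsupp.mapDomain_add]; rfl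

theorem starF_apply (u : MonoidAlgebra ℂ (FreeGroup α)) (t : FreeGroup α) :
    (starF u).coeff t = (starRingEnd ℂ) (u.coeff t⁻¹) := by
  unfold starF
  conv_lhs => rw [show t = (t⁻¹)⁻¹ from (inv_inv t).symm]
  rw [MonoidAlgebra.coeff_ofCoeff, Finsupp.mapDomain_apply inv_injective, Finsupp.mapRange_apply]

theorem starF_single_mul (a : FreeGroup α) (b : ℂ) (v : MonoidAlgebra ℂ (FreeGroup α)) :
    starF (MonoidAlgebra.single a b * v) = starF v * starF (MonoidAlgebra.single a b) := by
  induction v using MonoidAlgebra.induction with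
  | zero => rw [mul_zero, starF_zero, zero_mul]
  | single_add c d v hc hd ih =>
    rw [mul_add, starF_add, starF_add, add_mul, ih]
    congr 1
    rw [MonoidAlgebra.single_mul_single, starF_single, starF_single, starF_single,
      MonoidAlgebra.single_mul_single, mul_inv_rev, mul_comm b d, RingHom.map_mul]

theorem starF_mul (u v : MonoidAlgebra ℂ (FreeGroup α)) :
    starF (u * v) = starF v * starF u := by
  induction u using MonoidAlgebra.induction with
  | zero => rw [zero_mul, starF_zero, mul_zero]
  | single_add a b u ha hb ih =>
    rw [add_mul, starF_add, starF_add, mul_add, ih, starF_single_mul]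

theorem starF_starF (u : MonoidAlgebra ℂ (FreeGroup α)) : starF (starF u) = u := by
  ext t
  rw [starF_apply, starF_apply, inv_inv]
  exact Complex.conj_conj _

/-- the extension of the representation to the group algebra -/
noncomputable def Phi (π : FreeGroup α →* unitary (H →L[ℂ] H)) :
    MonoidAlgebra ℂ (FreeGroup α) →ₐ[ℂ] (H →L[ℂ] H) :=
  MonoidAlgebra.lift ℂ (H →L[ℂ] H) (FreeGroup α) (((unitary (H →L[ℂ] H)).subtype).comp π)

theorem Phi_single (π : FreeGroup α →* unitary (H →L[ℂ] H)) (s : FreeGroup α) (c : ℂ) :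
    Phi π (MonoidAlgebra.single s c) = c • (π s : H →L[ℂ] H) := by
  unfold Phi
  rw [MonoidAlgebra.lift_single]
  rfl

theorem phi_star (π : FreeGroup α →* unitary (H →L[ℂ] H)) (u : MonoidAlgebra ℂ (FreeGroup α))
    (x y : H) : ⟪(Phi π u) x, y⟫_ℂ = ⟪x, (Phi π (starF u)) y⟫_ℂ := by
  induction u using MonoidAlgebra.induction with
  | zero => rw [map_zero, starF_zero, map_zero]; simp
  | single_add a b u ha hb ih =>
    rw [map_add, starF_add, map_add, ContinuousLinearMap.add_apply, inner_add_left,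
      ContinuousLinearMap.add_apply, inner_add_right, ih]
    congr 1
    rw [starF_single, Phi_single, Phi_single, ContinuousLinearMap.smul_apply,
      inner_smul_left, ContinuousLinearMap.smul_apply, inner_smul_right]
    congr 1
    have h1 : ((π a⁻¹ : unitary (H →L[ℂ] H)) : H →L[ℂ] H)
        = ContinuousLinearMap.adjoint ((π a : unitary (H →L[ℂ] H)) : H →L[ℂ] H) := by
      rw [← ContinuousLinearMap.star_eq_adjoint]
      have h2 : π a⁻¹ = star (π a) := by rw [MonoidHom.map_inv, ← Unitary.star_eq_inv]
      rw [h2, Unitary.coe_star]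
    rw [h1, ContinuousLinearMap.adjoint_inner_right]

theorem Phi_apply_vec (π : FreeGroup α →* unitary (H →L[ℂ] H))
    (w : MonoidAlgebra ℂ (FreeGroup α)) (ξ : H) :
    (Phi π w) ξ = ∑ s ∈ w.coeff.support, w.coeff s • ((π s : H →L[ℂ] H) ξ) := by
  unfold Phi
  rw [MonoidAlgebra.lift_apply, Finsupp.sum]
  rw [ContinuousLinearMap.coe_sum', Finset.sum_apply]
  exact Finset.sum_congr rfl fun s _ => rfl

theorem inner_Phi_le (π : FreeGroup α →* unitary (H →L[ℂ] H)) (ξ : H) {p q : ℝ}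
    (hq0 : q ≠ 0) (hqp : Real.HolderConjugate q p)
    (hcoef : Summable fun s : FreeGroup α => ‖(⟪ξ, ((π s : H →L[ℂ] H)) ξ⟫_ℂ : ℂ)‖ ^ p)
    (w : MonoidAlgebra ℂ (FreeGroup α)) :
    ‖(⟪ξ, (Phi π w) ξ⟫_ℂ : ℂ)‖ ≤
      lqF q w * (∑' s : FreeGroup α, ‖(⟪ξ, ((π s : H →L[ℂ] H)) ξ⟫_ℂ : ℂ)‖ ^ p) ^ (1/p) := by
  have h1 : (⟪ξ, (Phi π w) ξ⟫_ℂ : ℂ)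
      = ∑ s ∈ w.coeff.support, w.coeff s * ⟪ξ, ((π s : H →L[ℂ] H)) ξ⟫_ℂ := by
    rw [Phi_apply_vec, inner_sum]
    exact Finset.sum_congr rfl fun s _ => inner_smul_right _ _ _
  rw [h1]
  calc ‖∑ s ∈ w.coeff.support, w.coeff s * ⟪ξ, ((π s : H →L[ℂ] H)) ξ⟫_ℂ‖
      ≤ ∑ s ∈ w.coeff.support, ‖w.coeff s‖ * ‖(⟪ξ, ((π s : H →L[ℂ] H)) ξ⟫_ℂ : ℂ)‖ :=
        le_trans (norm_sum_le _ _) (Finset.sum_le_sum fun s _ => le_of_eq (norm_mul _ _))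
  _ ≤ (∑ s ∈ w.coeff.support, ‖w.coeff s‖ ^ q) ^ (1/q)
      * (∑ s ∈ w.coeff.support, ‖(⟪ξ, ((π s : H →L[ℂ] H)) ξ⟫_ℂ : ℂ)‖ ^ p) ^ (1/p) := by
        have := Real.inner_le_Lp_mul_Lq (s := w.coeff.support) (f := fun s => ‖w.coeff s‖)
          (g := fun s => ‖(⟪ξ, ((π s : H →L[ℂ] H)) ξ⟫_ℂ : ℂ)‖) hqp
        simpa [abs_norm] using this
  _ ≤ lqF q w * (∑' s : FreeGroup α, ‖(⟪ξ, ((π s : H →L[ℂ] H)) ξ⟫_ℂ : ℂ)‖ ^ p) ^ (1/p) := by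
      have hp0 : (0:ℝ) < p := hqp.symm.pos
      apply mul_le_mul
      · exact le_of_eq rfl
      · exact Real.rpow_le_rpow (Finset.sum_nonneg fun s _ => Real.rpow_nonneg (norm_nonneg _) _)
          (Summable.sum_le_tsum w.coeff.support (fun s _ => Real.rpow_nonneg (norm_nonneg _) _) hcoef)
          (by positivity)
      · exact Real.rpow_nonneg (Finset.sum_nonneg fun s _ =>
          Real.rpow_nonneg (norm_nonneg _) _) _
      · exact lqF_nonneg _

theorem lqF_starF {q : ℝ} (hq : q ≠ 0) (g : MonoidAlgebra ℂ (FreeGroup α)) :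
    lqF q (starF g) = lqF q g := by
  have hsupp : (starF g).coeff.support ⊆ g.coeff.support.image (fun t => t⁻¹) := by
    intro t ht
    rw [Finsupp.mem_support_iff, starF_apply] at ht
    have : g.coeff t⁻¹ ≠ 0 := fun h => ht (by rw [h, map_zero])
    exact Finset.mem_image.mpr ⟨t⁻¹, Finsupp.mem_support_iff.mpr this, inv_inv t⟩
  have h1 : qsum q (starF g) = qsum q g := by
    rw [qsum_eq_sum hq _ hsupp, Finset.sum_image (fun a _ b _ h => inv_injective h)]
    refine Finset.sum_congr rfl fun t _ => ?_
    rw [starF_apply, inv_inv]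
    rw [RCLike.norm_conj]
  rw [lqF, lqF, h1]

theorem starF_support_norm {k : ℕ} (f₀ : MonoidAlgebra ℂ (FreeGroup α))
    (hf₀ : ∀ t ∈ f₀.coeff.support, FreeGroup.norm t = k) :
    ∀ t ∈ (starF f₀).coeff.support, FreeGroup.norm t = k := by
  intro t ht
  rw [Finsupp.mem_support_iff, starF_apply] at ht
  have : f₀.coeff t⁻¹ ≠ 0 := fun h => ht (by rw [h, map_zero])
  have := hf₀ t⁻¹ (Finsupp.mem_support_iff.mpr this)
  rwa [FreeGroup.norm_inv_eq] at this

theorem hh_pow_mul {q : ℝ} (hq1 : 1 < q) (hq2 : q ≤ 2) {k : ℕ}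
    (f₀ : MonoidAlgebra ℂ (FreeGroup α)) (hf₀ : ∀ t ∈ f₀.coeff.support, FreeGroup.norm t = k)
    (m : ℕ) (x : MonoidAlgebra ℂ (FreeGroup α)) :
    lqF q ((starF f₀ * f₀) ^ m * x) ≤ ((((k:ℝ)+1) * lqF q f₀)^2) ^ m * lqF q x := by
  induction m generalizing x with
  | zero => simp
  | succ m ih =>
    have hstep : lqF q ((starF f₀ * f₀) * x) ≤ ((((k:ℝ)+1) * lqF q f₀)^2) * lqF q x := by
      rw [mul_assoc]
      calc lqF q (starF f₀ * (f₀ * x))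
          ≤ ((k:ℝ)+1) * (lqF q (starF f₀) * lqF q (f₀ * x)) :=
            B1 hq1 hq2 k _ _ (starF_support_norm f₀ hf₀)
      _ ≤ ((k:ℝ)+1) * (lqF q f₀ * (((k:ℝ)+1) * (lqF q f₀ * lqF q x))) := by
          rw [lqF_starF (by positivity)]
          apply mul_le_mul_of_nonneg_left _ (by positivity)
          exact mul_le_mul_of_nonneg_left (B1 hq1 hq2 k _ _ hf₀) (lqF_nonneg _)
      _ = ((((k:ℝ)+1) * lqF q f₀)^2) * lqF q x := by ring
    calc lqF q ((starF f₀ * f₀) ^ (m+1) * x)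
        = lqF q ((starF f₀ * f₀) ^ m * ((starF f₀ * f₀) * x)) := by
          rw [pow_succ, mul_assoc]
    _ ≤ ((((k:ℝ)+1) * lqF q f₀)^2) ^ m * lqF q ((starF f₀ * f₀) * x) := ih _
    _ ≤ ((((k:ℝ)+1) * lqF q f₀)^2) ^ m * (((((k:ℝ)+1) * lqF q f₀)^2) * lqF q x) :=
          mul_le_mul_of_nonneg_left hstep (by positivity)
    _ = ((((k:ℝ)+1) * lqF q f₀)^2) ^ (m+1) * lqF q x := by ring

end REP


section MAIN

open scoped InnerProductSpace

variable {α : Type*} [DecidableEq α]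
variable {H : Type*} [NormedAddCommGroup H] [InnerProductSpace ℂ H] [CompleteSpace H]

theorem lqF_pos {q : ℝ} (hq : 0 < q) {f₀ : MonoidAlgebra ℂ (FreeGroup α)} (hne : f₀ ≠ 0) :
    0 < lqF q f₀ := by
  apply Real.rpow_pos_of_pos
  apply Finset.sum_pos
  · intro s hs
    exact Real.rpow_pos_of_pos (norm_pos_iff.mpr (Finsupp.mem_support_iff.mp hs)) _
  · exact Finsupp.support_nonempty_iff.mpr (MonoidAlgebra.coeff_eq_zero.not.mpr hne)

theorem main_bound (π : FreeGroup α →* unitary (H →L[ℂ] H)) (ξ : H) {p q : ℝ}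
    (hq1 : 1 < q) (hq2 : q ≤ 2) (hqp : Real.HolderConjugate q p)
    (hcoef : Summable fun s : FreeGroup α => ‖(⟪ξ, ((π s : H →L[ℂ] H)) ξ⟫_ℂ : ℂ)‖ ^ p)
    {k : ℕ} (f₀ : MonoidAlgebra ℂ (FreeGroup α))
    (hf₀ : ∀ t ∈ f₀.coeff.support, FreeGroup.norm t = k)
    (g : MonoidAlgebra ℂ (FreeGroup α)) :
    ‖(Phi π f₀) ((Phi π g) ξ)‖ ≤ (((k:ℝ)+1) * lqF q f₀) * ‖(Phi π g) ξ‖ := by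
  classical
  have hq0 : (0:ℝ) < q := lt_trans one_pos hq1
  by_cases hf0 : f₀ = 0
  · subst hf0
    rw [map_zero]
    simp [lqF_zero (ne_of_gt hq0)]
  set v : H := (Phi π g) ξ with hv
  by_cases hv0 : v = 0
  · rw [hv0, map_zero, norm_zero]
    have := lqF_nonneg (q := q) f₀
    positivity
  have hvpos : 0 < ‖v‖ := norm_pos_iff.mpr hv0
  set Cq : ℝ := ((k:ℝ)+1) * lqF q f₀ with hCq
  have hCqpos : 0 < Cq := by
    have := lqF_pos (q := q) hq0 hf0
    positivity
  set R : ℝ := Cq ^ 2 with hR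
  have hRpos : 0 < R := by positivity
  set hh : MonoidAlgebra ℂ (FreeGroup α) := starF f₀ * f₀ with hhh
  have hstar_hh : starF hh = hh := by
    rw [hhh, starF_mul, starF_starF]
  have hstar_pow : ∀ m : ℕ, starF (hh ^ m) = hh ^ m := by
    intro m
    induction m with
    | zero =>
      rw [pow_zero, MonoidAlgebra.one_def, starF_single]
      simp
    | succ m ih =>
      rw [pow_succ, starF_mul, ih, hstar_hh]
      exact (pow_succ' hh m).symm
  set a : ℕ → ℝ := fun m => RCLike.re (⟪v, (Phi π (hh ^ m)) v⟫_ℂ : ℂ) with ha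
  -- a (2m) is a square norm
  have ha2m : ∀ m : ℕ, a (2*m) = ‖(Phi π (hh ^ m)) v‖ ^ 2 := by
    intro m
    have h1 : (⟪v, (Phi π (hh ^ (2*m))) v⟫_ℂ : ℂ)
        = ⟪(Phi π (hh ^ m)) v, (Phi π (hh ^ m)) v⟫_ℂ := by
      rw [two_mul, pow_add, _root_.map_mul]
      have := (phi_star π (hh ^ m) v ((Phi π (hh ^ m)) v)).symm
      rw [hstar_pow m] at this
      rw [ContinuousLinearMap.mul_apply]
      exact this
    rw [ha]
    simp only []
    rw [h1]
    exact inner_self_eq_norm_sq _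
  have ha1 : a 1 = ‖(Phi π f₀) v‖ ^ 2 := by
    have h1 : (⟪v, (Phi π (hh ^ 1)) v⟫_ℂ : ℂ) = ⟪(Phi π f₀) v, (Phi π f₀) v⟫_ℂ := by
      rw [pow_one, hhh, _root_.map_mul]
      have := (phi_star π f₀ v ((Phi π f₀) v)).symm
      rw [ContinuousLinearMap.mul_apply]
      exact this
    rw [ha]
    simp only []
    rw [h1]
    exact inner_self_eq_norm_sq _
  -- Cauchy–Schwarz step : (a m)^2 ≤ ‖v‖^2 * a (2m)
  have hCS : ∀ m : ℕ, (a m) ^ 2 ≤ ‖v‖ ^ 2 * a (2*m) := by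
    intro m
    have h2 : |a m| ≤ ‖v‖ * ‖(Phi π (hh ^ m)) v‖ := by
      refine le_trans (RCLike.abs_re_le_norm _) ?_
      exact norm_inner_le_norm _ _
    have h3 : (a m) ^ 2 ≤ (‖v‖ * ‖(Phi π (hh ^ m)) v‖) ^ 2 := by
      rw [← sq_abs]
      exact pow_le_pow_left₀ (abs_nonneg _) h2 2
    calc (a m) ^ 2 ≤ (‖v‖ * ‖(Phi π (hh ^ m)) v‖) ^ 2 := h3
    _ = ‖v‖ ^ 2 * ‖(Phi π (hh ^ m)) v‖ ^ 2 := by ring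
    _ = ‖v‖ ^ 2 * a (2*m) := by rw [ha2m m]
  -- the ℓ^q bound on a m
  set Cp : ℝ := (∑' s : FreeGroup α, ‖(⟪ξ, ((π s : H →L[ℂ] H)) ξ⟫_ℂ : ℂ)‖ ^ p) ^ (1/p)
    with hCp
  set Dc : ℝ := (∑ t ∈ (starF g).coeff.support, ‖(starF g).coeff t‖) * (lqF q g) * Cp with hDc
  have hCppos : 0 ≤ Cp := Real.rpow_nonneg (tsum_nonneg fun s =>
    Real.rpow_nonneg (norm_nonneg _) _) _
  have hDcpos : 0 ≤ Dc := by
    have h4 : (0:ℝ) ≤ ∑ t ∈ (starF g).coeff.support, ‖(starF g).coeff t‖ :=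
      Finset.sum_nonneg fun t _ => norm_nonneg _
    have h5 := lqF_nonneg (q := q) g
    positivity
  have hbound : ∀ m : ℕ, a m ≤ Dc * R ^ m := by
    intro m
    have h6 : (⟪v, (Phi π (hh ^ m)) v⟫_ℂ : ℂ)
        = ⟪ξ, (Phi π (starF g * (hh ^ m * g))) ξ⟫_ℂ := by
      rw [hv]
      rw [_root_.map_mul, _root_.map_mul, ContinuousLinearMap.mul_apply, ContinuousLinearMap.mul_apply]
      have := phi_star π g ξ ((Phi π (hh ^ m)) ((Phi π g) ξ))
      rw [← this]
    have h7 : a m ≤ ‖(⟪ξ, (Phi π (starF g * (hh ^ m * g))) ξ⟫_ℂ : ℂ)‖ := by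
      rw [ha]
      simp only []
      rw [h6]
      exact RCLike.re_le_norm _
    have h8 := inner_Phi_le π ξ (ne_of_gt hq0) hqp hcoef (starF g * (hh ^ m * g))
    have h9 : lqF q (starF g * (hh ^ m * g))
        ≤ (∑ t ∈ (starF g).coeff.support, ‖(starF g).coeff t‖) * (R ^ m * lqF q g) := by
      calc lqF q (starF g * (hh ^ m * g))
          ≤ (∑ t ∈ (starF g).coeff.support, ‖(starF g).coeff t‖) * lqF q (hh ^ m * g) :=
            lqF_mul_le_l1 (le_of_lt hq1) _ _
      _ ≤ (∑ t ∈ (starF g).coeff.support, ‖(starF g).coeff t‖) * (R ^ m * lqF q g) := by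
          apply mul_le_mul_of_nonneg_left _ (Finset.sum_nonneg fun t _ => norm_nonneg _)
          have := hh_pow_mul hq1 hq2 f₀ hf₀ m g
          rw [hhh]
          rw [hR, hCq]
          exact this
    calc a m ≤ ‖(⟪ξ, (Phi π (starF g * (hh ^ m * g))) ξ⟫_ℂ : ℂ)‖ := h7
    _ ≤ lqF q (starF g * (hh ^ m * g)) * Cp := h8
    _ ≤ ((∑ t ∈ (starF g).coeff.support, ‖(starF g).coeff t‖) * (R ^ m * lqF q g)) * Cp :=
        mul_le_mul_of_nonneg_right h9 hCppos
    _ = Dc * R ^ m := by rw [hDc]; ring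
  -- the iteration
  have ha1nn : 0 ≤ a 1 := by rw [ha1]; positivity
  have hiter : ∀ n : ℕ, (a 1) ^ (2^n) * ‖v‖^2 ≤ (‖v‖^2) ^ (2^n) * a (2^n) := by
    intro n
    induction n with
    | zero => simp [mul_comm]
    | succ n ih =>
      have e1 : ∀ x : ℝ, (x ^ (2^n))^2 = x ^ (2^(n+1)) := fun x => by
        rw [← pow_mul, ← pow_succ]
      have hA : (0:ℝ) ≤ (a 1) ^ (2^n) * ‖v‖^2 := by positivity
      have h10 := pow_le_pow_left₀ hA ih 2
      have h13 := hCS (2^n)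
      have h2n : 2 * 2^n = 2^(n+1) := by rw [pow_succ]; ring
      have h14 : ((a 1) ^ (2^(n+1)) * ‖v‖^2) * ‖v‖^2
          ≤ ((‖v‖^2) ^ (2^(n+1)) * a (2^(n+1))) * ‖v‖^2 := by
        calc ((a 1) ^ (2^(n+1)) * ‖v‖^2) * ‖v‖^2
            = ((a 1) ^ (2^n) * ‖v‖^2)^2 := by rw [mul_pow, e1]; ring
        _ ≤ ((‖v‖^2) ^ (2^n) * a (2^n))^2 := h10
        _ = ((‖v‖^2) ^ (2^n))^2 * (a (2^n))^2 := by ring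
        _ ≤ ((‖v‖^2) ^ (2^n))^2 * (‖v‖^2 * a (2^(n+1))) := by
            refine mul_le_mul_of_nonneg_left ?_ (by positivity)
            rw [← h2n]
            exact h13
        _ = ((‖v‖^2) ^ (2^(n+1)) * a (2^(n+1))) * ‖v‖^2 := by rw [e1]; ring
      exact le_of_mul_le_mul_right h14 (by positivity)
  -- conclude a 1 ≤ R * ‖v‖^2
  have hfinal : a 1 ≤ R * ‖v‖^2 := by
    by_contra hlt
    push_neg at hlt
    set c : ℝ := a 1 / (R * ‖v‖^2) with hc
    have hc1 : 1 < c := by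
      rw [hc]
      rw [lt_div_iff₀ (by positivity)]
      linarith
    have hcn : ∀ n : ℕ, c ^ (2^n) ≤ Dc / ‖v‖^2 := by
      intro n
      have h16 := hiter n
      have h17 : a (2^n) ≤ Dc * R ^ (2^n) := hbound (2^n)
      have h18 : (a 1) ^ (2^n) * ‖v‖^2 ≤ (‖v‖^2) ^ (2^n) * (Dc * R ^ (2^n)) := by
        refine le_trans h16 ?_
        apply mul_le_mul_of_nonneg_left h17 (by positivity)
      rw [hc, div_pow, div_le_div_iff₀ (by positivity) (by positivity)]
      calc (a 1) ^ (2^n) * ‖v‖^2 ≤ (‖v‖^2) ^ (2^n) * (Dc * R ^ (2^n)) := h18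
      _ = Dc * (R * ‖v‖^2) ^ (2^n) := by rw [mul_pow]; ring
    obtain ⟨n, hn⟩ := pow_unbounded_of_one_lt (Dc / ‖v‖^2) hc1
    have h19 : c ^ n ≤ c ^ (2^n) :=
      pow_le_pow_right₀ (le_of_lt hc1) (le_of_lt (Nat.lt_two_pow_self (n := n)))
    have := le_trans h19 (hcn n)
    linarith
  -- done
  have h20 : ‖(Phi π f₀) v‖ ^ 2 ≤ (Cq * ‖v‖) ^ 2 := by
    rw [← ha1]
    calc a 1 ≤ R * ‖v‖^2 := hfinal
    _ = (Cq * ‖v‖) ^ 2 := by rw [hR]; ring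
  calc ‖(Phi π f₀) v‖ = Real.sqrt (‖(Phi π f₀) v‖ ^ 2) := (Real.sqrt_sq (norm_nonneg _)).symm
  _ ≤ Real.sqrt ((Cq * ‖v‖) ^ 2) := Real.sqrt_le_sqrt h20
  _ = Cq * ‖v‖ := Real.sqrt_sq (by positivity)

end MAIN

end HaagerupAux

/-- The `ℓ_q` norm of a function on a group. -/
noncomputable def lqNorm {G : Type*} (q : ℝ) (h : G → ℂ) : ℝ :=
  (∑' s, ‖h s‖ ^ q) ^ (1 / q)

open scoped InnerProductSpace in
/-- if `π` is a unitary representation of the free group `F_d`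
(`d ≥ 2`) with a cyclic vector `ξ` whose matrix coefficient lies in `ℓ_p`
(`2 ≤ p < ∞`, `1/p + 1/q = 1`), then `‖π(f)‖ ≤ (k+1)|f|_q` for every finitely
supported `f` supported on the sphere `W_k`. -/
theorem norm_pi_le_sphere (d k : ℕ) (hd : 2 ≤ d)
    (H : Type*) [NormedAddCommGroup H] [InnerProductSpace ℂ H] [CompleteSpace H]
    (π : FreeGroup (Fin d) →* unitary (H →L[ℂ] H)) (ξ : H)
    (hcyc : Dense (Submodule.span ℂ
      (Set.range fun s : FreeGroup (Fin d) => (π s : H →L[ℂ] H) ξ) : Set H))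
    (p q : ℝ) (hp1 : 2 ≤ p) (hpq : 1 / p + 1 / q = 1)
    (hcoef : Summable fun s : FreeGroup (Fin d) =>
      ‖(⟪ξ, (π s : H →L[ℂ] H) ξ⟫_ℂ : ℂ)‖ ^ p)
    (f : FreeGroup (Fin d) → ℂ) (hf : (Function.support f).Finite)
    (hfk : ∀ t, f t ≠ 0 → FreeGroup.norm t = k) :
    ‖∑ᶠ s : FreeGroup (Fin d), f s • (π s : H →L[ℂ] H)‖ ≤
      ((k : ℝ) + 1) * lqNorm q f := by
  classical
  -- exponent bookkeeping
  have hp0 : (0:ℝ) < p := by linarith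
  have hqp' : Real.HolderConjugate p q := Real.holderConjugate_iff.mpr ⟨by linarith, by simpa [one_div] using hpq⟩
  have hqp : Real.HolderConjugate q p := hqp'.symm
  have hq1 : 1 < q := hqp.lt
  have hq0 : (0:ℝ) < q := hqp.pos
  have hinvp : 1/p ≤ 1/2 := one_div_le_one_div_of_le (by norm_num) hp1
  have hinvq : (1:ℝ)/2 ≤ 1/q := by linarith
  have hq2 : q ≤ 2 := by
    rw [div_le_div_iff₀ two_pos hq0] at hinvq
    linarith
  -- package `f` as a finitely supported function
  set f₀ : MonoidAlgebra ℂ (FreeGroup (Fin d)) := MonoidAlgebra.ofCoeff (Finsupp.ofSupportFinite f hf) with hf₀def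
  have hf₀coe : ∀ s, f₀.coeff s = f s := fun s => rfl
  have hf₀supp : ∀ t ∈ f₀.coeff.support, FreeGroup.norm t = k := by
    intro t ht
    exact hfk t (by rw [← hf₀coe]; exact Finsupp.mem_support_iff.mp ht)
  -- rewrite the LHS as `Phi π f₀`
  have hLHS : (∑ᶠ s : FreeGroup (Fin d), f s • (π s : H →L[ℂ] H))
      = HaagerupAux.Phi π f₀ := by
    have h1 : (HaagerupAux.Phi π f₀ : H →L[ℂ] H)
        = ∑ s ∈ f₀.coeff.support, f₀.coeff s • (π s : H →L[ℂ] H) := by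
      unfold HaagerupAux.Phi
      rw [MonoidAlgebra.lift_apply, Finsupp.sum]
      exact Finset.sum_congr rfl fun s _ => rfl
    rw [h1]
    refine finsum_eq_finset_sum_of_support_subset _ ?_
    intro s hs
    rw [Function.mem_support] at hs
    have : f s ≠ 0 := fun h => hs (by rw [h, zero_smul])
    simpa [Finsupp.mem_support_iff, hf₀coe] using this
  -- rewrite the RHS
  have hRHS : lqNorm q f = HaagerupAux.lqF q f₀ := by
    unfold lqNorm HaagerupAux.lqF HaagerupAux.qsum
    congr 1
    refine tsum_eq_sum fun s hs => ?_
    have : f s = 0 := by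
      by_contra h
      exact hs (Finsupp.mem_support_iff.mpr (by rw [hf₀coe]; exact h))
    rw [this, norm_zero, Real.zero_rpow (ne_of_gt hq0)]
  rw [hLHS, hRHS]
  -- operator norm bound via the dense subspace
  have hlq0 : 0 ≤ HaagerupAux.lqF q f₀ := HaagerupAux.lqF_nonneg _
  refine ContinuousLinearMap.opNorm_le_bound _ (by positivity) fun v => ?_
  have hclosed : IsClosed {v : H |
      ‖(HaagerupAux.Phi π f₀) v‖ ≤ (((k:ℝ)+1) * HaagerupAux.lqF q f₀) * ‖v‖} := by
    apply isClosed_le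
    · exact ((HaagerupAux.Phi π f₀).continuous).norm
    · exact continuous_const.mul continuous_norm
  let L : MonoidAlgebra ℂ (FreeGroup (Fin d)) →ₗ[ℂ] H :=
    { toFun := fun g => (HaagerupAux.Phi π g) ξ
      map_add' := fun g₁ g₂ => by
        show (HaagerupAux.Phi π (g₁ + g₂)) ξ
            = (HaagerupAux.Phi π g₁) ξ + (HaagerupAux.Phi π g₂) ξ
        rw [map_add, ContinuousLinearMap.add_apply]
      map_smul' := fun c g => by
        show (HaagerupAux.Phi π (c • g)) ξ = (RingHom.id ℂ) c • (HaagerupAux.Phi π g) ξ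
        rw [map_smul, ContinuousLinearMap.smul_apply, RingHom.id_apply] }
  have hspan : Submodule.span ℂ
      (Set.range fun s : FreeGroup (Fin d) => (π s : H →L[ℂ] H) ξ) ≤ LinearMap.range L := by
    rw [Submodule.span_le]
    rintro _ ⟨s, rfl⟩
    refine ⟨MonoidAlgebra.single s 1, ?_⟩
    show (HaagerupAux.Phi π (MonoidAlgebra.single s 1)) ξ = _
    rw [HaagerupAux.Phi_single, one_smul]
  have hsub : (Submodule.span ℂ
      (Set.range fun s : FreeGroup (Fin d) => (π s : H →L[ℂ] H) ξ) : Set H)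
      ⊆ {v : H | ‖(HaagerupAux.Phi π f₀) v‖
          ≤ (((k:ℝ)+1) * HaagerupAux.lqF q f₀) * ‖v‖} := by
    intro v hv
    obtain ⟨g, rfl⟩ := hspan hv
    exact HaagerupAux.main_bound π ξ hq1 hq2 hqp hcoef f₀ hf₀supp g
  have hall : v ∈ {v : H | ‖(HaagerupAux.Phi π f₀) v‖
      ≤ (((k:ℝ)+1) * HaagerupAux.lqF q f₀) * ‖v‖} := by
    have h2 : closure (Submodule.span ℂ
        (Set.range fun s : FreeGroup (Fin d) => (π s : H →L[ℂ] H) ξ) : Set H)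
        ⊆ {v : H | ‖(HaagerupAux.Phi π f₀) v‖
            ≤ (((k:ℝ)+1) * HaagerupAux.lqF q f₀) * ‖v‖} := by
      rw [← hclosed.closure_eq]
      exact closure_mono hsub
    apply h2
    rw [hcyc.closure_eq]
    trivial
  exact hall
end

section
/- Let F_d be the free group on d ≥ 2 generators and 0 < α < 1. The function φ_α(s) = α^{|s|} is positive definite on F_d. -/
open scoped ComplexOrder

/-- A function `φ` on a group is positive definite if all matrices
`(φ (s i⁻¹ * s j))` are positive semidefinite. -/
def IsPosDefFn {G : Type*} [Group G] (φ : G → ℂ) : Prop :=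
  ∀ (n : ℕ) (s : Fin n → G) (c : Fin n → ℂ),
    0 ≤ ∑ i, ∑ j, (starRingEnd ℂ) (c i) * c j * φ ((s i)⁻¹ * s j)

open List

namespace Haagerup

variable {β : Type*} [DecidableEq β]

/-- The relation forbidding cancellation: adjacent letters `a b` are OK iff not inverse pair. -/
def Rel (a b : β × Bool) : Prop := ¬(a.1 = b.1 ∧ a.2 = !b.2)

/-- A word is reduced iff no adjacent cancelling pair. -/
abbrev Reduced (L : List (β × Bool)) : Prop := List.Chain' Rel L

theorem reduce_eq_self {L : List (β × Bool)} (h : Reduced L) : FreeGroup.reduce L = L := by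
  induction L with
  | nil => rfl
  | cons x L ih =>
    have h' := List.isChain_cons.1 h
    rw [FreeGroup.reduce.cons, ih h'.2]
    cases L with
    | nil => rfl
    | cons y t =>
      have := h'.1 y rfl
      simp only [Rel] at this
      simp [this]

theorem reduced_reduce (L : List (β × Bool)) : Reduced (FreeGroup.reduce L) := by
  induction L with
  | nil => exact List.isChain_nil
  | cons x L ih =>
    rw [FreeGroup.reduce.cons]
    rcases hL : FreeGroup.reduce L with _ | ⟨y, t⟩
    · exact List.isChain_singleton x
    · rw [hL] at ih
      by_cases hxy : x.1 = y.1 ∧ x.2 = !y.2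
      · simp only [if_pos hxy]
        exact ih.tail
      · simp only [if_neg hxy]
        exact List.isChain_cons.2 ⟨fun z hz => by simp_all [Rel], ih⟩

theorem reduced_toWord (x : FreeGroup β) : Reduced x.toWord := by
  have := x.reduce_toWord
  rw [← this]; exact reduced_reduce _

theorem toWord_mk_reduced {L : List (β × Bool)} (h : Reduced L) :
    (FreeGroup.mk L).toWord = L := by
  rw [FreeGroup.toWord_mk, reduce_eq_self h]

theorem norm_mk_reduced {L : List (β × Bool)} (h : Reduced L) :
    (FreeGroup.mk L).norm = L.length := by
  rw [FreeGroup.norm, toWord_mk_reduced h]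

section Lcp

variable {X : Type*} [DecidableEq X]

/-- Longest common prefix of two lists. -/
def lcp : List X → List X → List X
  | a :: as, b :: bs => if a = b then a :: lcp as bs else []
  | _, _ => []

@[simp] theorem lcp_nil_left (M : List X) : lcp [] M = [] := by cases M <;> rfl
@[simp] theorem lcp_nil_right (L : List X) : lcp L [] = [] := by cases L <;> rfl

theorem lcp_prefix_left : ∀ (L M : List X), lcp L M <+: L
  | [], M => by simp
  | a :: as, [] => by simp
  | a :: as, b :: bs => by
    rw [lcp]
    split
    · obtain ⟨t, ht⟩ := lcp_prefix_left as bs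
      exact ⟨t, by simp [ht]⟩
    · exact (a :: as).nil_prefix

theorem lcp_prefix_right : ∀ (L M : List X), lcp L M <+: M
  | [], M => by simp
  | a :: as, [] => by simp
  | a :: as, b :: bs => by
    rw [lcp]
    split
    · next h =>
      subst h
      obtain ⟨t, ht⟩ := lcp_prefix_right as bs
      exact ⟨t, by simp [ht]⟩
    · exact (b :: bs).nil_prefix

theorem take_eq_take_of_le_lcp : ∀ (L M : List X) (k : ℕ),
    k ≤ (lcp L M).length → L.take k = M.take k
  | [], M, k, h => by simp at h; simp [h]
  | a :: as, [], k, h => by simp at h; simp [h]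
  | a :: as, b :: bs, k, h => by
    rw [lcp] at h
    split at h
    · next hab =>
      subst hab
      cases k with
      | zero => simp
      | succ k =>
        simp only [List.length_cons, Nat.succ_le_succ_iff] at h
        simp [take_eq_take_of_le_lcp as bs k h]
    · simp at h; simp [h]

theorem le_lcp_of_take_eq : ∀ (L M : List X) (k : ℕ),
    k ≤ L.length → L.take k = M.take k → k ≤ (lcp L M).length
  | L, M, 0, _, _ => Nat.zero_le _
  | [], M, k + 1, hk, h => by simp at hk
  | a :: as, M, k + 1, hk, h => by
    cases M with
    | nil => simp at h
    | cons b bs =>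
      simp only [List.take_succ_cons, List.cons.injEq] at h
      obtain ⟨rfl, h2⟩ := h
      rw [lcp, if_pos rfl]
      simp only [List.length_cons, Nat.succ_le_succ_iff] at hk ⊢
      exact le_lcp_of_take_eq as bs k hk h2

theorem lcp_diverge : ∀ (L M : List X) (a b : X) (as bs : List X),
    L.drop (lcp L M).length = a :: as → M.drop (lcp L M).length = b :: bs → a ≠ b
  | [], M, a, b, as, bs, h1, h2 => by simp at h1
  | x :: xs, [], a, b, as, bs, h1, h2 => by simp at h2
  | x :: xs, y :: ys, a, b, as, bs, h1, h2 => by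
    by_cases hxy : x = y
    · rw [lcp, if_pos hxy] at h1 h2
      simp only [List.length_cons, List.drop_succ_cons] at h1 h2
      exact lcp_diverge xs ys a b as bs h1 h2
    · rw [lcp, if_neg hxy] at h1 h2
      simp only [List.length_nil, List.drop_zero, List.cons.injEq] at h1 h2
      rw [← h1.1, ← h2.1]
      exact hxy

end Lcp

theorem reduced_invRev {A : List (β × Bool)} (h : Reduced A) :
    Reduced (FreeGroup.invRev A) := by
  unfold FreeGroup.invRev
  simp only [Reduced, List.Chain']; rw [List.isChain_reverse]
  refine List.isChain_map_of_isChain _ (fun a b hab => ?_) h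
  simp only [flip, Rel, Bool.not_not] at *
  rintro ⟨h1, h2⟩
  exact hab ⟨h1.symm, h2.symm⟩

theorem norm_inv_mul (x y : FreeGroup β) :
    (x⁻¹ * y).norm + 2 * (lcp x.toWord y.toWord).length = x.norm + y.norm := by
  set L := x.toWord with hL
  set M := y.toWord with hM
  set m := (lcp L M).length with hm
  set A := L.drop m with hA
  set B := M.drop m with hB
  have ht1 : L.take m = lcp L M := (List.prefix_iff_eq_take.1 (lcp_prefix_left L M)).symm
  have ht2 : M.take m = lcp L M := (List.prefix_iff_eq_take.1 (lcp_prefix_right L M)).symm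
  have hLd : lcp L M ++ A = L := by rw [← ht1]; exact List.take_append_drop m L
  have hMd : lcp L M ++ B = M := by rw [← ht2]; exact List.take_append_drop m M
  have hredA : Reduced A := (reduced_toWord x).drop m
  have hredB : Reduced B := (reduced_toWord y).drop m
  have key : x⁻¹ * y = FreeGroup.mk (FreeGroup.invRev A ++ B) := by
    have hx : x = FreeGroup.mk (lcp L M) * FreeGroup.mk A := by
      rw [FreeGroup.mul_mk, hLd, hL, FreeGroup.mk_toWord]
    have hy : y = FreeGroup.mk (lcp L M) * FreeGroup.mk B := by
      rw [FreeGroup.mul_mk, hMd, hM, FreeGroup.mk_toWord]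
    rw [hx, hy, ← FreeGroup.mul_mk, ← FreeGroup.inv_mk]
    group
  have hredAB : Reduced (FreeGroup.invRev A ++ B) := by
    refine List.isChain_append.2 ⟨reduced_invRev hredA, hredB, fun p hp q hq => ?_⟩
    rcases hA' : A with _ | ⟨a, as⟩
    · rw [hA'] at hp; simp [FreeGroup.invRev] at hp
    rcases hB' : B with _ | ⟨b, bs⟩
    · rw [hB'] at hq; simp at hq
    rw [hA'] at hp
    rw [hB'] at hq
    unfold FreeGroup.invRev at hp
    rw [List.getLast?_reverse] at hp
    simp only [List.head?_map, List.head?_cons, Option.map_some, Option.mem_def,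
      Option.some.injEq] at hp hq
    have hne : a ≠ b := lcp_diverge L M a b as bs (hA ▸ hA') (hB ▸ hB')
    subst hp
    subst hq
    simp only [Rel, Bool.not_eq_eq_eq_not, Bool.not_not]
    rintro ⟨h1, h2⟩
    exact hne (Prod.ext h1 (by simp [← h2]))
  have hnorm : (x⁻¹ * y).norm = A.length + B.length := by
    rw [key, norm_mk_reduced hredAB, List.length_append, FreeGroup.invRev_length]
  have hlen1 : m + A.length = L.length := by
    conv_rhs => rw [← hLd]
    simp [hm]
  have hlen2 : m + B.length = M.length := by
    conv_rhs => rw [← hMd]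
    simp [hm]
  have hnx : x.norm = L.length := rfl
  have hny : y.norm = M.length := rfl
  omega

/-- The prefix of length `k` of (the reduced word of) `x`, as a group element. -/
def pref (x : FreeGroup β) (k : ℕ) : FreeGroup β := FreeGroup.mk (x.toWord.take k)

theorem toWord_pref (x : FreeGroup β) (k : ℕ) : (pref x k).toWord = x.toWord.take k :=
  toWord_mk_reduced ((reduced_toWord x).take k)

theorem norm_pref (x : FreeGroup β) {k : ℕ} (hk : k ≤ x.norm) : (pref x k).norm = k := by
  rw [FreeGroup.norm, toWord_pref, List.length_take]
  exact min_eq_left hk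

/-- `w` is a geodesic prefix of `x`. -/
def IsPref (w x : FreeGroup β) : Prop := w.norm ≤ x.norm ∧ pref x w.norm = w

theorem isPref_pref (x : FreeGroup β) {k : ℕ} (hk : k ≤ x.norm) : IsPref (pref x k) x := by
  refine ⟨?_, ?_⟩ <;> rw [norm_pref x hk]
  exact hk

theorem isPref_le_lcp {w x y : FreeGroup β} (hx : IsPref w x) (hy : IsPref w y) :
    w.norm ≤ (lcp x.toWord y.toWord).length := by
  apply le_lcp_of_take_eq x.toWord y.toWord w.norm hx.1
  have h1 := congrArg FreeGroup.toWord hx.2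
  have h2 := congrArg FreeGroup.toWord hy.2
  rw [toWord_pref] at h1 h2
  rw [h1, h2]

theorem pref_eq_of_le_lcp {x y : FreeGroup β} {k : ℕ}
    (hk : k ≤ (lcp x.toWord y.toWord).length) : pref x k = pref y k := by
  unfold pref
  rw [take_eq_take_of_le_lcp _ _ _ hk]

/-- Squares of the Haagerup coefficients. -/
noncomputable def Csq (α : ℝ) : ℕ → ℝ
  | 0 => 1
  | k + 1 => α⁻¹ ^ (2 * (k + 1)) * (1 - α ^ 2)

theorem Csq_nonneg {α : ℝ} (h0 : 0 < α) (h1 : α ≤ 1) (k : ℕ) : 0 ≤ Csq α k := by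
  cases k with
  | zero => norm_num [Csq]
  | succ k =>
    have h2 : α ^ 2 ≤ 1 := by nlinarith
    have h3 : (0:ℝ) ≤ α⁻¹ ^ (2 * (k + 1)) := pow_nonneg (inv_nonneg.2 h0.le) _
    unfold Csq
    nlinarith

theorem sum_Csq {α : ℝ} (h0 : α ≠ 0) (m : ℕ) :
    ∑ k ∈ Finset.range (m + 1), Csq α k = α⁻¹ ^ (2 * m) := by
  induction m with
  | zero => simp [Csq]
  | succ m ih =>
    rw [Finset.sum_range_succ, ih]
    show α⁻¹ ^ (2 * m) + α⁻¹ ^ (2 * (m + 1)) * (1 - α ^ 2) = α⁻¹ ^ (2 * (m + 1))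
    have h : α⁻¹ ^ 2 * α ^ 2 = 1 := by rw [inv_pow, inv_mul_cancel₀ (pow_ne_zero 2 h0)]
    linear_combination (-(α⁻¹ ^ (2 * m))) * h

open Classical in
/-- The Haagerup vector entries. -/
noncomputable def gfun (α : ℝ) (w x : FreeGroup β) : ℝ :=
  if IsPref w x then α ^ x.norm * Real.sqrt (Csq α w.norm) else 0

theorem sum_gfun {α : ℝ} (h0 : 0 < α) (h1 : α < 1) (x y : FreeGroup β)
    (T : Finset (FreeGroup β)) (hT : ∀ w, IsPref w x → w ∈ T) :
    ∑ w ∈ T, gfun α w x * gfun α w y = α ^ (x⁻¹ * y).norm := by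
  classical
  set m := (lcp x.toWord y.toWord).length with hm
  have hmx : m ≤ x.norm := (lcp_prefix_left _ _).length_le
  have hmy : m ≤ y.norm := (lcp_prefix_right _ _).length_le
  set S : Finset (FreeGroup β) := (Finset.range (m + 1)).image (pref x) with hS
  have hsub : S ⊆ T := by
    intro w hw
    simp only [hS, Finset.mem_image, Finset.mem_range] at hw
    obtain ⟨k, hk, rfl⟩ := hw
    exact hT _ (isPref_pref x (le_trans (Nat.lt_succ_iff.1 hk) hmx))
  have hzero : ∀ w ∈ T, w ∉ S → gfun α w x * gfun α w y = 0 := by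
    intro w _ hw
    by_cases hx : IsPref w x
    swap
    · unfold gfun; rw [if_neg hx, zero_mul]
    by_cases hy : IsPref w y
    swap
    · unfold gfun; rw [if_neg hy, mul_zero]
    exfalso
    apply hw
    have hle : w.norm ≤ m := isPref_le_lcp hx hy
    exact Finset.mem_image.2 ⟨w.norm, Finset.mem_range.2 (Nat.lt_succ_of_le hle), hx.2⟩
  have hinj : ∀ k1 ∈ Finset.range (m + 1), ∀ k2 ∈ Finset.range (m + 1),
      pref x k1 = pref x k2 → k1 = k2 := by
    intro k1 hk1 k2 hk2 h
    rw [Finset.mem_range, Nat.lt_succ_iff] at hk1 hk2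
    have := congrArg FreeGroup.norm h
    rwa [norm_pref x (hk1.trans hmx), norm_pref x (hk2.trans hmx)] at this
  rw [← Finset.sum_subset hsub hzero, hS, Finset.sum_image hinj]
  have hterm : ∀ k ∈ Finset.range (m + 1),
      gfun α (pref x k) x * gfun α (pref x k) y = α ^ x.norm * α ^ y.norm * Csq α k := by
    intro k hk
    rw [Finset.mem_range, Nat.lt_succ_iff] at hk
    have hpx : IsPref (pref x k) x := isPref_pref x (hk.trans hmx)
    have hpxy : pref x k = pref y k := pref_eq_of_le_lcp hk
    have hpy : IsPref (pref x k) y := by rw [hpxy]; exact isPref_pref y (hk.trans hmy)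
    have hnk : (pref x k).norm = k := norm_pref x (hk.trans hmx)
    rw [gfun, if_pos hpx, gfun, if_pos hpy, hnk, mul_mul_mul_comm,
      Real.mul_self_sqrt (Csq_nonneg h0 h1.le k)]
  rw [Finset.sum_congr rfl hterm, ← Finset.mul_sum, sum_Csq h0.ne' m]
  have hkey := norm_inv_mul x y
  have h2 : x.norm + y.norm = (x⁻¹ * y).norm + 2 * m := by omega
  have h3 : α ^ x.norm * α ^ y.norm = α ^ (x⁻¹ * y).norm * α ^ (2 * m) := by
    rw [← pow_add, ← pow_add, h2]
  rw [h3, inv_pow, mul_assoc, mul_inv_cancel₀ (by positivity), mul_one]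

end Haagerup

/-- for `0 < α < 1`, the function `s ↦ α^{|s|}` is positive
definite on the free group `F_d`, `d ≥ 2`. -/
theorem phi_alpha_posdef (d : ℕ) (hd : 2 ≤ d) (α : ℝ) (h0 : 0 < α) (h1 : α < 1) :
    IsPosDefFn (fun s : FreeGroup (Fin d) => ((α : ℂ) ^ FreeGroup.norm s)) := by
  intro n s c
  classical
  set T : Finset (FreeGroup (Fin d)) :=
    Finset.univ.biUnion
      (fun j : Fin n => (Finset.range ((s j).norm + 1)).image (Haagerup.pref (s j))) with hTdef
  have hT : ∀ i : Fin n, ∀ w, Haagerup.IsPref w (s i) → w ∈ T := by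
    intro i w hw
    refine Finset.mem_biUnion.2 ⟨i, Finset.mem_univ i, ?_⟩
    exact Finset.mem_image.2 ⟨w.norm, Finset.mem_range.2 (Nat.lt_succ_of_le hw.1), hw.2⟩
  set g : FreeGroup (Fin d) → Fin n → ℂ :=
    fun w i => ((Haagerup.gfun α w (s i) : ℝ) : ℂ) with hg
  set z : FreeGroup (Fin d) → ℂ := fun w => ∑ j, c j * g w j with hz
  have key : ∑ i, ∑ j, (starRingEnd ℂ) (c i) * c j * ((α : ℂ) ^ ((s i)⁻¹ * s j).norm)
      = ∑ w ∈ T, (starRingEnd ℂ) (z w) * z w := by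
    calc ∑ i, ∑ j, (starRingEnd ℂ) (c i) * c j * ((α : ℂ) ^ ((s i)⁻¹ * s j).norm)
        = ∑ i, ∑ j, ∑ w ∈ T,
            ((starRingEnd ℂ) (c i) * g w i) * (c j * g w j) := by
          refine Finset.sum_congr rfl fun i _ => Finset.sum_congr rfl fun j _ => ?_
          have hval : ((α : ℂ) ^ ((s i)⁻¹ * s j).norm)
              = ((∑ w ∈ T, Haagerup.gfun α w (s i) * Haagerup.gfun α w (s j) : ℝ) : ℂ) := by
            rw [Haagerup.sum_gfun h0 h1 (s i) (s j) T (hT i)]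
            push_cast
            ring
          rw [hval]
          push_cast [Finset.mul_sum]
          exact Finset.sum_congr rfl fun w _ => by rw [hg]; push_cast; ring
      _ = ∑ i, ∑ w ∈ T, ∑ j, ((starRingEnd ℂ) (c i) * g w i) * (c j * g w j) :=
          Finset.sum_congr rfl fun i _ => Finset.sum_comm
      _ = ∑ w ∈ T, ∑ i, ∑ j, ((starRingEnd ℂ) (c i) * g w i) * (c j * g w j) :=
          Finset.sum_comm
      _ = ∑ w ∈ T, (starRingEnd ℂ) (z w) * z w := by
          refine Finset.sum_congr rfl fun w _ => ?_
          have hstar : (starRingEnd ℂ) (z w) = ∑ i, (starRingEnd ℂ) (c i) * g w i := by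
            rw [hz, map_sum]
            refine Finset.sum_congr rfl fun i _ => ?_
            rw [map_mul, hg, Complex.conj_ofReal]
          rw [hstar, Finset.sum_mul_sum]
  show 0 ≤ ∑ i, ∑ j, (starRingEnd ℂ) (c i) * c j * ((α : ℂ) ^ ((s i)⁻¹ * s j).norm)
  rw [key]
  refine Finset.sum_nonneg fun w _ => ?_
  rw [starRingEnd_apply]
  exact star_mul_self_nonneg (z w)
end

section
/- Let F_d be the free group on d ≥ 2 generators. For every conjugacy class K in F_d with K ≠ {e}, setting k = min{|s| : s ∈ K}, one has |W_{k+2n} ∩ K| ≥ (2d-1)^{n-1} for every n ≥ 1. -/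
set_option linter.unusedSectionVars false

namespace ConjSphere

open FreeGroup List

variable {α : Type*} [DecidableEq α]

/-- no-cancellation relation between adjacent letters -/
def R : α × Bool → α × Bool → Prop := fun a b => ¬(a.1 = b.1 ∧ a.2 = !b.2)

lemma reduce_eq_self_of_chain' : ∀ {L : List (α × Bool)}, List.Chain' (R (α := α)) L →
    FreeGroup.reduce L = L
  | [], _ => rfl
  | [x], _ => rfl
  | x :: y :: L, h => by
      have h1 : R x y := (List.isChain_cons_cons.mp h).1
      have h2 := (List.isChain_cons_cons.mp h).2
      rw [FreeGroup.reduce.cons, reduce_eq_self_of_chain' h2]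
      exact if_neg h1

lemma chain'_of_reduce : ∀ {L : List (α × Bool)}, FreeGroup.reduce L = L →
    List.Chain' (R (α := α)) L
  | [], _ => List.isChain_nil
  | x :: L, h => by
      rw [FreeGroup.reduce.cons] at h
      rcases hL : FreeGroup.reduce L with _ | ⟨y, ys⟩
      · rw [hL] at h
        simp only at h
        have : L = [] := by simpa using congrArg List.tail h.symm
        subst this; exact List.isChain_singleton x
      · rw [hL] at h
        simp only at h
        by_cases hc : x.1 = y.1 ∧ x.2 = !y.2
        · rw [if_pos hc] at h
          exfalso
          have hlen : (FreeGroup.reduce L).length ≤ L.length :=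
            FreeGroup.Red.length_le FreeGroup.reduce.red
          rw [hL] at hlen
          have hlen2 := congrArg List.length h
          simp at hlen hlen2
          omega
        · rw [if_neg hc] at h
          have hLeq : L = y :: ys := by simpa using congrArg List.tail h.symm
          subst hLeq
          exact List.isChain_cons_cons.mpr ⟨hc, chain'_of_reduce hL⟩

lemma toWord_mk_of_chain' {L : List (α × Bool)} (h : List.Chain' (R (α := α)) L) :
    (FreeGroup.mk L).toWord = L := by
  rw [FreeGroup.toWord_mk, reduce_eq_self_of_chain' h]

lemma chain'_toWord (x : FreeGroup α) : List.Chain' (R (α := α)) x.toWord :=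
  chain'_of_reduce (FreeGroup.reduce_toWord x)

lemma chain'_invRev {L : List (α × Bool)} (h : List.Chain' (R (α := α)) L) :
    List.Chain' (R (α := α)) (FreeGroup.invRev L) := by
  unfold FreeGroup.invRev
  rw [List.Chain', List.isChain_reverse]
  refine List.isChain_map_of_isChain _ ?_ h
  rintro a b hab ⟨h1, h2⟩
  simp only [] at h1 h2
  exact hab ⟨h1.symm, by simp at h2; rw [h2, Bool.not_not]⟩





variable {β γ : Type*}

/-- build a list by starting at `c` and repeatedly prepending a letter
determined by the current head and the next "choice". -/
def build (ν : γ → β → γ) (c : γ) : List β → List γ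
  | [] => [c]
  | i :: is =>
    let L := build ν c is
    ν (L.head?.getD c) i :: L

lemma build_ne_nil (ν : γ → β → γ) (c : γ) (is : List β) : build ν c is ≠ [] := by
  cases is <;> simp [build]

lemma build_length (ν : γ → β → γ) (c : γ) (is : List β) :
    (build ν c is).length = is.length + 1 := by
  induction is with
  | nil => rfl
  | cons i is ih => simp [build, ih]

lemma build_getLast (ν : γ → β → γ) (c : γ) (is : List β) :
    (build ν c is).getLast (build_ne_nil ν c is) = c := by
  induction is with
  | nil => rfl
  | cons i is ih =>
    exact (List.getLast_cons (build_ne_nil ν c is)).trans ih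

lemma build_chain' {R' : γ → γ → Prop} (ν : γ → β → γ) (c : γ)
    (hν : ∀ p i, R' (ν p i) p) (is : List β) :
    List.Chain' R' (build ν c is) := by
  induction is with
  | nil => exact List.isChain_singleton c
  | cons i is ih =>
    rw [show build ν c (i :: is) =
      ν ((build ν c is).head?.getD c) i :: build ν c is from rfl]
    refine List.isChain_cons.mpr ⟨?_, ih⟩
    intro y hy
    have hy' : (build ν c is).head? = some y := Option.mem_def.mp hy
    rw [show (build ν c is).head?.getD c = y by rw [hy']; rfl]
    exact hν y i

lemma build_injective (ν : γ → β → γ) (c : γ) (hν : ∀ p, Function.Injective (ν p)) :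
    ∀ is is' : List β, build ν c is = build ν c is' → is = is' := by
  intro is
  induction is with
  | nil =>
    intro is' h
    cases is' with
    | nil => rfl
    | cons i' is' =>
      exfalso
      have := congrArg List.length h
      rw [build_length, build_length] at this
      simp at this
  | cons i is ih =>
    intro is' h
    cases is' with
    | nil =>
      exfalso
      have := congrArg List.length h
      rw [build_length, build_length] at this
      simp at this
    | cons j js =>
      rw [show build ν c (i :: is) =
          ν ((build ν c is).head?.getD c) i :: build ν c is from rfl,
        show build ν c (j :: js) =
          ν ((build ν c js).head?.getD c) j :: build ν c js from rfl] at h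
      have h2 : build ν c is = build ν c js := congrArg List.tail h
      have htail : is = js := ih js h2
      subst htail
      have h1 : ν ((build ν c is).head?.getD c) i =
          ν ((build ν c is).head?.getD c) j := by
        have := congrArg List.head? h
        simpa using this
      exact congrArg (· :: is) (hν _ h1)




end ConjSphere

open ConjSphere in
/-- if `K ≠ {e}` is a conjugacy class in `F_d` (`d ≥ 2`) and
`k = min{|s| : s ∈ K}`, then `|W_{k+2n} ∩ K| ≥ (2d-1)^{n-1}` for every
`n ≥ 1`. -/
theorem conjugacy_class_sphere_card (d : ℕ) (hd : 2 ≤ d)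
    (s₀ : FreeGroup (Fin d)) (hs₀ : s₀ ≠ 1)
    (K : Set (FreeGroup (Fin d))) (hK : K = {t | IsConj s₀ t})
    (k : ℕ) (hk : k = sInf {m : ℕ | ∃ t ∈ K, FreeGroup.norm t = m})
    (n : ℕ) (hn : 1 ≤ n) :
    (2 * d - 1) ^ (n - 1) ≤
      Set.ncard {t ∈ K | FreeGroup.norm t = k + 2 * n} := by
  classical
  subst hK
  -- obtain a minimal-length element t₀ of the conjugacy class
  have hMne : FreeGroup.norm s₀ ∈
      {m : ℕ | ∃ t ∈ {t | IsConj s₀ t}, FreeGroup.norm t = m} :=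
    ⟨s₀, IsConj.refl s₀, rfl⟩
  have hkmem : k ∈ {m : ℕ | ∃ t ∈ {t | IsConj s₀ t}, FreeGroup.norm t = m} := by
    rw [hk]; exact Nat.sInf_mem ⟨_, hMne⟩
  obtain ⟨t₀, ht₀K, ht₀⟩ := hkmem
  set L : List (Fin d × Bool) := t₀.toWord with hLdef
  have hL : List.Chain' R L := chain'_toWord t₀
  have hLlen : L.length = k := ht₀
  have ht₀ne : t₀ ≠ 1 := by
    rintro rfl
    obtain ⟨c, hc⟩ := isConj_iff.mp ht₀K
    apply hs₀
    have h2 : s₀ = c⁻¹ * (c * s₀ * c⁻¹) * c := by group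
    rw [hc] at h2
    simpa using h2
  have hk1 : 1 ≤ k := by
    rcases Nat.eq_zero_or_pos k with h0 | h
    · exact absurd (FreeGroup.norm_eq_zero.mp (ht₀.trans h0)) ht₀ne
    · exact h
  have hLne : L ≠ [] := by
    intro h
    rw [h] at hLlen
    simp at hLlen
    omega
  set a : Fin d × Bool := L.head hLne with ha
  set b : Fin d × Bool := L.getLast hLne with hb
  -- choose a letter cl avoiding the two forbidden values
  obtain ⟨cl, hcl1, hcl2⟩ :
      ∃ cl : Fin d × Bool, cl ≠ (a.1, !a.2) ∧ cl ≠ b := by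
    have h4 : 4 ≤ Fintype.card (Fin d × Bool) := by
      rw [Fintype.card_prod, Fintype.card_fin, Fintype.card_bool]; omega
    by_contra hcon
    push_neg at hcon
    have hsub : (Finset.univ : Finset (Fin d × Bool)) ⊆ {(a.1, !a.2), b} := by
      intro x _
      simp only [Finset.mem_insert, Finset.mem_singleton]
      by_cases hx : x = (a.1, !a.2)
      · exact Or.inl hx
      · exact Or.inr (hcon x hx)
    have hle := Finset.card_le_card hsub
    have h2 : ({(a.1, !a.2), b} : Finset (Fin d × Bool)).card ≤ 2 :=
      (Finset.card_insert_le _ _).trans (by simp)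
    rw [Finset.card_univ] at hle
    omega
  -- the pivot-avoiding successor map
  have hcard : Fintype.card (Fin d × Bool) = (2 * d - 1) + 1 := by
    rw [Fintype.card_prod, Fintype.card_fin, Fintype.card_bool]; omega
  set e : (Fin d × Bool) ≃ Fin ((2 * d - 1) + 1) := Fintype.equivFinOfCardEq hcard
    with he
  set ν : (Fin d × Bool) → Fin (2 * d - 1) → (Fin d × Bool) :=
    fun p i => e.symm ((e (p.1, !p.2)).succAbove i) with hν
  have hν1 : ∀ p i, ν p i ≠ (p.1, !p.2) := by
    intro p i h
    have h2 := congrArg e h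
    simp only [hν, Equiv.apply_symm_apply] at h2
    exact Fin.succAbove_ne _ i h2
  have hνR : ∀ p i, R (ν p i) p := by
    rintro p i ⟨h1, h2⟩
    exact hν1 p i (Prod.ext h1 h2)
  have hνinj : ∀ p, Function.Injective (ν p) := by
    intro p x y h
    exact Fin.succAbove_right_injective (e.symm.injective h)
  -- the family of conjugating words
  set A : (Fin (n - 1) → Fin (2 * d - 1)) → List (Fin d × Bool) :=
    fun f => build ν cl (List.ofFn f) with hA
  have hAne : ∀ f, A f ≠ [] := fun f => build_ne_nil ν cl (List.ofFn f)
  have hAlen : ∀ f, (A f).length = n := by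
    intro f
    rw [hA]
    simp only [build_length, List.length_ofFn]
    omega
  have hAchain : ∀ f, List.Chain' R (A f) := fun f => build_chain' ν cl hνR _
  have hAlast : ∀ f, (A f).getLast (hAne f) = cl :=
    fun f => build_getLast ν cl (List.ofFn f)
  set W : (Fin (n - 1) → Fin (2 * d - 1)) → List (Fin d × Bool) :=
    fun f => A f ++ (L ++ FreeGroup.invRev (A f)) with hW
  -- the whole word W f is reduced
  have hchainW : ∀ f, List.Chain' R (W f) := by
    intro f
    refine (hAchain f).append ?_ ?_
    · refine hL.append (chain'_invRev (hAchain f)) ?_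
      intro x hx y hy
      rw [List.getLast?_eq_getLast_of_ne_nil hLne] at hx
      have hx' : b = x := by simpa using hx
      have hhead : (FreeGroup.invRev (A f)).head? = some (cl.1, !cl.2) := by
        unfold FreeGroup.invRev
        rw [List.head?_reverse, List.getLast?_map,
          List.getLast?_eq_getLast_of_ne_nil (hAne f), hAlast f]
        rfl
      rw [hhead] at hy
      have hy' : ((cl.1, !cl.2) : Fin d × Bool) = y := by simpa using hy
      rw [← hx', ← hy']
      rintro ⟨h1, h2⟩
      simp only [Bool.not_not] at h1 h2
      exact hcl2 ((Prod.ext h1 h2 : b = cl).symm)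
    · intro x hx y hy
      rw [List.getLast?_eq_getLast_of_ne_nil (hAne f), hAlast f] at hx
      have hx' : cl = x := by simpa using hx
      rw [List.head?_append_of_ne_nil L hLne] at hy
      rw [List.head?_eq_head hLne] at hy
      have hy' : a = y := by simpa using hy
      rw [← hx', ← hy']
      rintro ⟨h1, h2⟩
      exact hcl1 (Prod.ext h1 h2 : cl = (a.1, !a.2))
  -- norm computation
  have hnorm : ∀ f, FreeGroup.norm (FreeGroup.mk (W f)) = k + 2 * n := by
    intro f
    have h1 : (FreeGroup.mk (W f)).toWord = W f := toWord_mk_of_chain' (hchainW f)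
    show (FreeGroup.mk (W f)).toWord.length = k + 2 * n
    rw [h1, hW]
    simp only [List.length_append, FreeGroup.invRev_length, hAlen f, hLlen]
    omega
  -- membership in the conjugacy class
  have hmem : ∀ f, IsConj s₀ (FreeGroup.mk (W f)) := by
    intro f
    refine ht₀K.trans (isConj_iff.mpr ⟨FreeGroup.mk (A f), ?_⟩)
    rw [FreeGroup.inv_mk]
    calc FreeGroup.mk (A f) * t₀ * FreeGroup.mk (FreeGroup.invRev (A f))
        = FreeGroup.mk (A f) * FreeGroup.mk L *
            FreeGroup.mk (FreeGroup.invRev (A f)) := by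
          rw [hLdef, FreeGroup.mk_toWord]
      _ = FreeGroup.mk (A f ++ L ++ FreeGroup.invRev (A f)) := by
          rw [FreeGroup.mul_mk, FreeGroup.mul_mk]
      _ = FreeGroup.mk (W f) := by rw [hW]; simp [List.append_assoc]
  -- injectivity
  set G : (Fin (n - 1) → Fin (2 * d - 1)) → FreeGroup (Fin d) :=
    fun f => FreeGroup.mk (W f) with hG
  have hGinj : Function.Injective G := by
    intro f g h
    have hw : W f = W g := by
      have h2 := congrArg FreeGroup.toWord h
      rwa [hG, toWord_mk_of_chain' (hchainW f), toWord_mk_of_chain' (hchainW g)]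
        at h2
    have hlen : (A f).length = (A g).length := by rw [hAlen f, hAlen g]
    have hAeq : A f = A g := (List.append_inj hw hlen).1
    exact List.ofFn_injective (build_injective ν cl hνinj _ _ hAeq)
  -- finiteness of the sphere
  have hfin : {t : FreeGroup (Fin d) | FreeGroup.norm t = k + 2 * n}.Finite := by
    have hsub : {t : FreeGroup (Fin d) | FreeGroup.norm t = k + 2 * n} ⊆
        FreeGroup.toWord ⁻¹' {l : List (Fin d × Bool) | l.length = k + 2 * n} :=
      fun t ht => ht
    exact ((List.finite_length_eq (Fin d × Bool) (k + 2 * n)).preimage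
      FreeGroup.toWord_injective.injOn).subset hsub
  -- conclude
  have hrange : Set.range G ⊆
      {t ∈ {t | IsConj s₀ t} | FreeGroup.norm t = k + 2 * n} := by
    rintro _ ⟨f, rfl⟩
    exact ⟨hmem f, hnorm f⟩
  calc (2 * d - 1) ^ (n - 1)
      = Nat.card (Fin (n - 1) → Fin (2 * d - 1)) := by
        rw [Nat.card_eq_fintype_card, Fintype.card_fun, Fintype.card_fin,
          Fintype.card_fin]
    _ = Nat.card (Set.range G) := (Nat.card_range_of_injective hGinj).symm
    _ = (Set.range G).ncard := Nat.card_coe_set_eq _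
    _ ≤ _ := Set.ncard_le_ncard hrange
        (hfin.subset (fun t ht => ht.2))
end

section
/- Let F_d be the free group on d ≥ 2 generators and 2 ≤ p < ∞. Suppose φ : F_d → ℂ is constant on conjugacy classes and satisfies: for all α ∈ (0,1), the function s ↦ φ(s)α^{|s|} lies in ℓ_p(F_d). Then φ(s) = 0 for all s ≠ e. -/
namespace ClassFnAux
open FreeGroup List

variable {α : Type*}

/-- inverse of a letter -/
def inv2 (a : α × Bool) : α × Bool := (a.1, !a.2)

lemma inv2_inv2 (a : α × Bool) : inv2 (inv2 a) = a := by simp [inv2]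

lemma ne_inv2_self (a : α × Bool) : a ≠ inv2 a := by
  intro h
  have := congrArg Prod.snd h
  simp [inv2] at this

lemma ne_inv2_of_fst_ne {a b : α × Bool} (h : a.1 ≠ b.1) : a ≠ inv2 b := by
  intro he; exact h (by rw [he]; rfl)

/-- A word is reduced iff no letter is followed by its inverse. -/
def Reduced (L : List (α × Bool)) : Prop :=
  List.Chain' (fun a b => b ≠ inv2 a) L

lemma reduce_eq_self [DecidableEq α] : ∀ {L : List (α × Bool)}, Reduced L → reduce L = L := by
  intro L h
  induction L with
  | nil => rfl
  | cons x L ih =>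
    rw [FreeGroup.reduce.cons, ih h.tail]
    cases L with
    | nil => rfl
    | cons hd tl =>
      have hx : hd ≠ inv2 x := (List.isChain_cons_cons.1 h).1
      show (if x.1 = hd.1 ∧ x.2 = !hd.2 then tl else x :: hd :: tl) = x :: hd :: tl
      rw [if_neg]
      rintro ⟨h1, h2⟩
      exact hx (Prod.ext h1.symm (by simp [inv2, h2]))

lemma reduced_reduce [DecidableEq α] (L : List (α × Bool)) : Reduced (reduce L) := by
  by_contra hc
  unfold Reduced List.Chain' at hc
  rw [List.isChain_iff_getElem] at hc
  push_neg at hc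
  obtain ⟨i, hi, hne⟩ := hc
  set R := reduce L with hR
  have hne' : R.get ⟨i+1, by omega⟩ = inv2 (R.get ⟨i, by omega⟩) := by simpa using hne
  have hi1 : i + 1 < R.length := by omega
  have hi0 : i < R.length := by omega
  have hd2 : R.drop i = R.get ⟨i, hi0⟩ :: R.get ⟨i+1, hi1⟩ :: R.drop (i+2) := by
    rw [List.drop_eq_getElem_cons hi0, List.drop_eq_getElem_cons hi1]
    rfl
  have hdec : R = R.take i ++ ((R.get ⟨i, hi0⟩).1, (R.get ⟨i, hi0⟩).2) :: ((R.get ⟨i, hi0⟩).1, !(R.get ⟨i, hi0⟩).2) :: R.drop (i+2) := by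
    conv_lhs => rw [← List.take_append_drop i R]
    rw [hd2, hne']
    rfl
  exact FreeGroup.reduce.not hdec.symm.symm


lemma reduced_toWord [DecidableEq α] (x : FreeGroup α) : Reduced x.toWord := by
  rw [← FreeGroup.reduce_toWord]
  exact reduced_reduce _

lemma toWord_mk_reduced [DecidableEq α] {L : List (α × Bool)} (h : Reduced L) :
    (FreeGroup.mk L).toWord = L := by
  rw [FreeGroup.toWord_mk, reduce_eq_self h]

lemma chain'_of_mem {β : Type*} {R : β → β → Prop} :
    ∀ {l : List β}, (∀ x ∈ l, ∀ y ∈ l, R x y) → List.Chain' R l := by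
  intro l
  induction l with
  | nil => intro _; exact List.isChain_nil
  | cons x l ih =>
    intro h
    unfold List.Chain'
    rw [List.isChain_cons]
    refine ⟨fun y hy => ?_, ih fun a ha b hb =>
      h a (List.mem_cons_of_mem _ ha) b (List.mem_cons_of_mem _ hb)⟩
    exact h x List.mem_cons_self y
      (List.mem_cons_of_mem _ (List.mem_of_mem_head? hy))

lemma pick3 {β : Type*} {c1 c2 c3 f l : β} (h12 : c1 ≠ c2) (h13 : c1 ≠ c3)
    (h23 : c2 ≠ c3) : ∃ z : β, z ≠ f ∧ z ≠ l := by
  by_cases h1 : c1 ≠ f ∧ c1 ≠ l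
  · exact ⟨c1, h1⟩
  by_cases h2 : c2 ≠ f ∧ c2 ≠ l
  · exact ⟨c2, h2⟩
  by_cases h3 : c3 ≠ f ∧ c3 ≠ l
  · exact ⟨c3, h3⟩
  simp only [not_and_or, not_not] at h1 h2 h3
  rcases h1 with h1 | h1 <;> rcases h2 with h2 | h2 <;> rcases h3 with h3 | h3 <;>
    first
      | exact absurd (h1.trans h2.symm) h12
      | exact absurd (h1.trans h3.symm) h13
      | exact absurd (h2.trans h3.symm) h23

lemma conj_family [DecidableEq α] {s : FreeGroup α} (hwne : s.toWord ≠ [])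
    {z y : α × Bool} (hyz : y.1 ≠ z.1)
    (hzh : z ≠ inv2 (s.toWord.head hwne))
    (hzl : z ≠ s.toWord.getLast hwne) (m : ℕ) :
    ∃ t : (Fin m → Bool) → FreeGroup α, Function.Injective t ∧
      ∀ v, IsConj s (t v) ∧ FreeGroup.norm (t v) = FreeGroup.norm s + 2 * (m + 1) := by
  classical
  set c : Bool → α × Bool := fun b => if b then z else y with hc
  set uW : (Fin m → Bool) → List (α × Bool) := fun v => List.ofFn (c ∘ v) ++ [z] with huW
  set W : (Fin m → Bool) → List (α × Bool) :=
    fun v => uW v ++ (s.toWord ++ FreeGroup.invRev (uW v)) with hW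
  have hmemu : ∀ v, ∀ x ∈ uW v, x = z ∨ x = y := by
    intro v x hx
    rcases List.mem_append.1 hx with hx | hx
    · obtain ⟨i, hi⟩ : ∃ i, (c ∘ v) i = x := by simpa [List.mem_ofFn] using hx
      cases hb : v i <;> rw [← hi] <;> simp [hc, hb]
    · left; simpa using hx
  have hPzy : ∀ a b : α × Bool, (a = z ∨ a = y) → (b = z ∨ b = y) → b ≠ inv2 a := by
    rintro a b (ha | ha) (hb | hb) <;> rw [ha, hb]
    · exact ne_inv2_self z
    · exact ne_inv2_of_fst_ne hyz
    · exact ne_inv2_of_fst_ne (Ne.symm hyz)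
    · exact ne_inv2_self y
  have hmeminv : ∀ v, ∀ x ∈ FreeGroup.invRev (uW v), x = inv2 z ∨ x = inv2 y := by
    intro v x hx
    rw [FreeGroup.invRev, List.mem_reverse, List.mem_map] at hx
    obtain ⟨a, ha, hax⟩ := hx
    have hx2 : x = inv2 a := hax.symm
    rcases hmemu v a ha with h' | h'
    · left; rw [hx2, h']
    · right; rw [hx2, h']
  have hPinv : ∀ a b : α × Bool, (a = inv2 z ∨ a = inv2 y) → (b = inv2 z ∨ b = inv2 y) →
      b ≠ inv2 a := by
    rintro a b (ha | ha) (hb | hb) <;> rw [ha, hb, inv2_inv2]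
    · exact Ne.symm (ne_inv2_self z)
    · exact fun h => hyz (by simpa [inv2] using congrArg Prod.fst h)
    · exact fun h => hyz (by simpa [inv2] using (congrArg Prod.fst h).symm)
    · exact Ne.symm (ne_inv2_self y)
  have hredu : ∀ v, Reduced (uW v) :=
    fun v => chain'_of_mem fun a ha b hb => hPzy a b (hmemu v a ha) (hmemu v b hb)
  have hredinv : ∀ v, Reduced (FreeGroup.invRev (uW v)) :=
    fun v => chain'_of_mem fun a ha b hb => hPinv a b (hmeminv v a ha) (hmeminv v b hb)
  have hlastu : ∀ v, (uW v).getLast? = some z := by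
    intro v; simp [huW]
  have hheadinv : ∀ v, (FreeGroup.invRev (uW v)).head? = some (inv2 z) := by
    intro v; simp [huW, FreeGroup.invRev, inv2]
  have hredW : ∀ v, Reduced (W v) := by
    intro v
    refine List.IsChain.append (hredu v) (List.IsChain.append (reduced_toWord s) (hredinv v) ?_) ?_
    · intro x hx y' hy'
      rw [List.getLast?_eq_getLast hwne, Option.mem_some_iff] at hx
      rw [hheadinv v, Option.mem_some_iff] at hy'
      subst hx; subst hy'
      intro h
      apply hzl
      have := congrArg inv2 h
      rw [inv2_inv2, inv2_inv2] at this
      exact this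
    · intro x hx y' hy'
      rw [hlastu v, Option.mem_some_iff] at hx
      rw [List.head?_append_of_ne_nil _ hwne, List.head?_eq_head hwne,
        Option.mem_some_iff] at hy'
      subst hx; subst hy'
      intro h
      apply hzh
      have := congrArg inv2 h.symm
      rw [inv2_inv2] at this
      exact this
  refine ⟨fun v => FreeGroup.mk (W v), ?_, ?_⟩
  · intro v v' h
    have hWW : W v = W v' := by
      have h1 := congrArg FreeGroup.toWord h
      rwa [toWord_mk_reduced (hredW v), toWord_mk_reduced (hredW v')] at h1
    have hlen : (uW v).length = (uW v').length := by simp [huW]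
    have huu : uW v = uW v' := by
      have := congrArg (List.take (uW v).length) hWW
      rwa [List.take_left, hlen, List.take_left] at this
    have hofn : List.ofFn (c ∘ v) = List.ofFn (c ∘ v') := by
      have := huu
      rwa [huW, List.append_left_inj] at this
    have hcc : c ∘ v = c ∘ v' := List.ofFn_inj.1 hofn
    have hzy : z ≠ y := fun h => hyz (congrArg Prod.fst h).symm
    funext i
    have := congrFun hcc i
    cases hvi : v i <;> cases hvi' : v' i <;>
      simp only [Function.comp_apply, hvi, hvi', hc, if_true, if_false] at this ⊢
    · exact absurd this.symm hzy
    · exact absurd this hzy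
  · intro v
    have hmk : FreeGroup.mk (W v) = FreeGroup.mk (uW v) * s * (FreeGroup.mk (uW v))⁻¹ := by
      conv_rhs => rw [← FreeGroup.mk_toWord (x := s)]
      rw [FreeGroup.inv_mk, FreeGroup.mul_mk, FreeGroup.mul_mk, hW, List.append_assoc]
    constructor
    · show IsConj s (FreeGroup.mk (W v))
      rw [hmk]
      exact isConj_iff.2 ⟨FreeGroup.mk (uW v), rfl⟩
    · show FreeGroup.norm (FreeGroup.mk (W v)) = _
      have : (FreeGroup.mk (W v)).toWord = W v := toWord_mk_reduced (hredW v)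
      rw [FreeGroup.norm, this, hW]
      simp only [List.length_append, FreeGroup.invRev_length, huW, List.length_ofFn,
        List.length_singleton, FreeGroup.norm]
      omega

end ClassFnAux


/-- for `2 ≤ p < ∞`, if `φ : F_d → ℂ` is constant on conjugacy
classes and `s ↦ φ(s)α^{|s|}` lies in `ℓ_p(F_d)` for every `α ∈ (0,1)`, then
`φ` vanishes off the identity. -/
theorem class_function_vanishes (d : ℕ) (hd : 2 ≤ d) (p : ℝ) (hp : 2 ≤ p)
    (φ : FreeGroup (Fin d) → ℂ)
    (hconst : ∀ s t : FreeGroup (Fin d), IsConj s t → φ s = φ t)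
    (hsum : ∀ α : ℝ, 0 < α → α < 1 →
      Summable fun s : FreeGroup (Fin d) =>
        (‖φ s‖ * α ^ FreeGroup.norm s) ^ p) :
    ∀ s : FreeGroup (Fin d), s ≠ 1 → φ s = 0 := by
  classical
  intro s hs1
  by_contra hφ
  have hwne : s.toWord ≠ [] := by
    simpa [FreeGroup.toWord_eq_nil_iff] using hs1
  have h01 : (0 : ℕ) < d := by omega
  have h11 : (1 : ℕ) < d := by omega
  set i0 : Fin d := ⟨0, h01⟩ with hi0
  set i1 : Fin d := ⟨1, h11⟩ with hi1
  have hi01 : i0 ≠ i1 := by simp [hi0, hi1, Fin.ext_iff]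
  obtain ⟨z, hzh, hzl⟩ :=
    ClassFnAux.pick3 (c1 := ((i0, true) : Fin d × Bool)) (c2 := (i0, false))
      (c3 := (i1, true)) (f := ClassFnAux.inv2 (s.toWord.head hwne))
      (l := s.toWord.getLast hwne) (by simp) (by simp [hi01]) (by simp [hi01])
  set y : Fin d × Bool := if z.1 = i0 then (i1, true) else (i0, true) with hy
  have hyz : y.1 ≠ z.1 := by
    by_cases h : z.1 = i0
    · rw [h]; simp only [hy, if_pos h]; exact Ne.symm hi01
    · simp only [hy, if_neg h]; exact fun he => h he.symm
  have hp0 : (0 : ℝ) < p := by linarith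
  set α : ℝ := (2 : ℝ) ^ (-(4 * p)⁻¹) with hα
  have hα0 : 0 < α := Real.rpow_pos_of_pos (by norm_num) _
  have hα1 : α < 1 := by
    apply Real.rpow_lt_one_of_one_lt_of_neg (by norm_num)
    have : 0 < (4 * p)⁻¹ := by positivity
    linarith
  have hsummable := hsum α hα0 hα1
  set g : FreeGroup (Fin d) → ℝ := fun x => (‖φ x‖ * α ^ FreeGroup.norm x) ^ p with hg
  have hgnn : ∀ x, 0 ≤ g x := fun x => Real.rpow_nonneg (by positivity) _
  set B := ∑' x, g x with hB
  set C := ‖φ s‖ with hC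
  have hC0 : 0 < C := norm_pos_iff.2 hφ
  set k := FreeGroup.norm s with hk
  have key : ∀ m : ℕ, (2 : ℝ) ^ m * (C * α ^ (k + 2 * (m + 1))) ^ p ≤ B := by
    intro m
    obtain ⟨t, htinj, htprop⟩ := ClassFnAux.conj_family hwne hyz hzh hzl m
    have hgt : ∀ v : Fin m → Bool, g (t v) = (C * α ^ (k + 2 * (m + 1))) ^ p := by
      intro v
      obtain ⟨hconj, hnorm⟩ := htprop v
      have h1 : φ (t v) = φ s := (hconst s (t v) hconj).symm
      show (‖φ (t v)‖ * α ^ FreeGroup.norm (t v)) ^ p = _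
      rw [h1, hnorm]
    calc (2 : ℝ) ^ m * (C * α ^ (k + 2 * (m + 1))) ^ p
        = ∑ v : Fin m → Bool, g (t v) := by
          rw [Finset.sum_congr rfl fun v _ => hgt v, Finset.sum_const, Finset.card_univ,
            Fintype.card_fun, Fintype.card_bool, Fintype.card_fin, nsmul_eq_mul,
            Nat.cast_pow, Nat.cast_ofNat]
      _ = ∑ x ∈ Finset.univ.image t, g x :=
          (Finset.sum_image fun a _ b _ h => htinj h).symm
      _ ≤ B := Summable.sum_le_tsum _ (fun _ _ => hgnn _) hsummable
  set β : ℝ := α ^ p with hβ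
  have hβval : β = (2 : ℝ) ^ (-(4 : ℝ)⁻¹) := by
    rw [hβ, hα, ← Real.rpow_mul (by norm_num : (0:ℝ) ≤ 2)]
    congr 1
    field_simp
  have hβ0 : 0 < β := by rw [hβval]; exact Real.rpow_pos_of_pos (by norm_num) _
  have hβ2 : β ^ 2 = (2 : ℝ) ^ (-(2 : ℝ)⁻¹) := by
    rw [hβval, ← Real.rpow_natCast ((2:ℝ) ^ (-(4:ℝ)⁻¹)) 2,
      ← Real.rpow_mul (by norm_num : (0:ℝ) ≤ 2)]
    norm_num
  have hr1 : (1 : ℝ) < 2 * β ^ 2 := by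
    rw [hβ2]
    have h2 : (2 : ℝ) * 2 ^ (-(2 : ℝ)⁻¹) = 2 ^ (1 + -(2 : ℝ)⁻¹) := by
      rw [Real.rpow_add (by norm_num), Real.rpow_one]
    rw [h2]
    have h3 : (1 : ℝ) = (2 : ℝ) ^ (0 : ℝ) := (Real.rpow_zero 2).symm
    rw [h3]
    apply (Real.rpow_lt_rpow_left_iff (by norm_num : (1:ℝ) < 2)).2
    norm_num
  have key2 : ∀ m : ℕ, (C ^ p * β ^ (k + 2)) * (2 * β ^ 2) ^ m ≤ B := by
    intro m
    have h1 := key m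
    have hap : (α ^ (k + 2 * (m + 1))) ^ p = β ^ (k + 2 * (m + 1)) := by
      rw [← Real.rpow_natCast α (k + 2 * (m + 1)), ← Real.rpow_natCast β (k + 2 * (m + 1)), hβ,
        ← Real.rpow_mul hα0.le, ← Real.rpow_mul hα0.le, mul_comm]
    rw [Real.mul_rpow hC0.le (by positivity), hap] at h1
    have hexp : k + 2 * (m + 1) = (k + 2) + 2 * m := by ring
    calc (C ^ p * β ^ (k + 2)) * (2 * β ^ 2) ^ m
        = (2 : ℝ) ^ m * (C ^ p * β ^ (k + 2 * (m + 1))) := by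
          rw [hexp]; ring
      _ ≤ B := h1
  have hE0 : 0 < C ^ p * β ^ (k + 2) := by positivity
  obtain ⟨m, hm⟩ := pow_unbounded_of_one_lt (B / (C ^ p * β ^ (k + 2))) hr1
  have hkey := key2 m
  rw [div_lt_iff₀ hE0] at hm
  nlinarith [hm, hkey]
end
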